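/- arXiv:2007.02475 — 4 statements merged into one kernel-verified Lean document; each statement's English description precedes it below -/
import Mathlib

section
/- Let n ≥ 2 and let Ω ⊆ ℝⁿ be an open set. Let F : Ω → ℂⁿ and g : Ω → ℂ be measurable and essentially bounded. Suppose that for every ζ ∈ ℂⁿ with ζ·ζ = 0, writing v_ζ(x) := exp(ζ·x), one has F(x)·(Dv_ζ)(x) + g(x) v_ζ(x) = 0 for Lebesgue-almost every x ∈ Ω (equivalently, −i(F(x)·ζ) exp(ζ·x) + g(x) exp(ζ·x) = 0 a.e. in Ω). Then F(x) = 0 for a.e. x ∈ Ω and g(x) = 0 for a.e. x ∈ Ω. -/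
/-!
Dividing by the nonvanishing exponential leaves `-i F·ζ + g = 0` a.e. for each null `ζ`.
Taking `ζ = 0` gives `g = 0`, and the null vectors `e_j ± i e_k` with `k ≠ j` (this is where
`n ≥ 2` enters) then give `F_j = 0`. Only finitely many `ζ` are used, so the almost-everywhere
statements can be intersected.
-/

open MeasureTheory Matrix Complex

section NullVectors

variable {ι : Type*} [Fintype ι] [DecidableEq ι]

lemma dotProduct_single_add_single (a : ι → ℂ) (j k : ι) (c : ℂ) :
    a ⬝ᵥ (Pi.single j 1 + Pi.single k c) = a j + a k * c := by
  simp [dotProduct_add]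

lemma single_add_single_isNull {j k : ι} (hjk : j ≠ k) {c : ℂ} (hc : c * c = -1) :
    (Pi.single j 1 + Pi.single k c : ι → ℂ) ⬝ᵥ (Pi.single j 1 + Pi.single k c) = 0 := by
  rw [dotProduct_single_add_single]
  simp [hjk, hjk.symm, hc]

theorem ae_eq_zero_of_forall_null [Nontrivial ι] {α : Type*} [MeasurableSpace α]
    {μ : Measure α} (F : α → ι → ℂ) (g : α → ℂ)
    (h : ∀ ζ : ι → ℂ, ζ ⬝ᵥ ζ = 0 → ∀ᵐ x ∂μ, -I * (F x ⬝ᵥ ζ) + g x = 0) :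
    (∀ᵐ x ∂μ, F x = 0) ∧ ∀ᵐ x ∂μ, g x = 0 := by
  have hg : ∀ᵐ x ∂μ, g x = 0 := by
    filter_upwards [h 0 (zero_dotProduct 0)] with x hx
    simpa using hx
  refine ⟨?_, hg⟩
  have hF : ∀ j, ∀ᵐ x ∂μ, F x j = 0 := by
    intro j
    obtain ⟨k, hkj⟩ := exists_ne j
    have hplus := h _ (single_add_single_isNull hkj.symm I_mul_I)
    have hminus := h _ (single_add_single_isNull hkj.symm (c := -I) (by rw [neg_mul_neg, I_mul_I]))
    filter_upwards [hplus, hminus, hg] with x hp hm hx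
    rw [dotProduct_single_add_single] at hp hm
    linear_combination (I / 2) * (hp + hm) - I * hx + F x j * I_mul_I
  filter_upwards [ae_all_iff.mpr hF] with x hx
  exact funext hx

end NullVectors

theorem vanishing_from_null_exponentials_general (n : ℕ) (hn : 2 ≤ n)
    (Ω : Set (Fin n → ℝ))
    (F : (Fin n → ℝ) → (Fin n → ℂ)) (g : (Fin n → ℝ) → ℂ)
    (hid : ∀ ζ : Fin n → ℂ, (∑ j, ζ j * ζ j) = 0 →
      ∀ᵐ x ∂(volume.restrict Ω),
        (-Complex.I) * (∑ j, F x j * ζ j) * Complex.exp (∑ j, ζ j * (x j : ℂ))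
          + g x * Complex.exp (∑ j, ζ j * (x j : ℂ)) = 0) :
    (∀ᵐ x ∂(volume.restrict Ω), F x = 0) ∧
      (∀ᵐ x ∂(volume.restrict Ω), g x = 0) := by
  have : Nontrivial (Fin n) := Fin.nontrivial_iff_two_le.mpr hn
  refine ae_eq_zero_of_forall_null F g fun ζ hζ => ?_
  filter_upwards [hid ζ hζ] with x hx
  refine (mul_eq_zero.mp ?_).resolve_right (exp_ne_zero (∑ j, ζ j * (x j : ℂ)))
  rw [dotProduct]
  linear_combination hx

/-- Let `n ≥ 2`, `Ω ⊆ ℝⁿ` open, `F : Ω → ℂⁿ` and `g : Ω → ℂ`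
measurable and essentially bounded.  If for every null vector `ζ ∈ ℂⁿ`
(`ζ·ζ = 0`), with `v_ζ(x) = exp(ζ·x)`, one has
`F(x)·(Dv_ζ)(x) + g(x) v_ζ(x) = 0`, i.e.
`−i(F(x)·ζ) exp(ζ·x) + g(x) exp(ζ·x) = 0`, for Lebesgue-a.e. `x ∈ Ω`,
then `F = 0` a.e. in `Ω` and `g = 0` a.e. in `Ω`. -/
theorem vanishing_from_null_exponentials (n : ℕ) (hn : 2 ≤ n)
    (Ω : Set (Fin n → ℝ)) (hΩ : IsOpen Ω)
    (F : (Fin n → ℝ) → (Fin n → ℂ)) (g : (Fin n → ℝ) → ℂ)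
    (hFmeas : Measurable F) (hgmeas : Measurable g)
    (hFbdd : MemLp F ⊤ (volume.restrict Ω))
    (hgbdd : MemLp g ⊤ (volume.restrict Ω))
    (hid : ∀ ζ : Fin n → ℂ, (∑ j, ζ j * ζ j) = 0 →
      ∀ᵐ x ∂(volume.restrict Ω),
        (-Complex.I) * (∑ j, F x j * ζ j) * Complex.exp (∑ j, ζ j * (x j : ℂ))
          + g x * Complex.exp (∑ j, ζ j * (x j : ℂ)) = 0) :
    (∀ᵐ x ∂(volume.restrict Ω), F x = 0) ∧
      (∀ᵐ x ∂(volume.restrict Ω), g x = 0) :=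
  vanishing_from_null_exponentials_general n hn Ω F g hid
end

section
/- Let n ≥ 2, let Ω ⊂ ℝⁿ be an open bounded set, let c > 0, and set ζ := i e₁ + e₂ ∈ ℂⁿ. Let F : Ω → ℂⁿ and g : Ω → ℂ be measurable and essentially bounded. Suppose there exist constants C > 0 and N ≥ 0 such that for every h ∈ (0,1) there is a C¹ function w_h : ℝⁿ → ℂ with sup_{x∈Ω}(|w_h(x)| + |∇w_h(x)|) ≤ C (1 + 1/h)^N e^{−c/h}, and such that the function v_h(x) := exp(−i(x·ζ)/h) + w_h(x) satisfies F(x)·(Dv_h)(x) + g(x) v_h(x) = 0 for Lebesgue-almost every x ∈ Ω. Then F(x)·ζ = 0 for Lebesgue-almost every x ∈ Ω with x₁ > −c. -/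
/-! Substituting `v_h = e^{-i x·ζ/h} + w_h` into the equation gives
`e^{-i x·ζ/h} (F·ζ) = h (F·Dw_h + g w_h + g e^{-i x·ζ/h})`. As `|e^{-i x·ζ/h}| = e^{x₁/h}`,
this bounds `|F·ζ|` by `h (∑|F_j| + |g|) C (1 + 1/h)^N e^{-(c + x₁)/h} + h |g|`, which tends
to `0` as `h → 0⁺` when `x₁ > -c`. Letting `h` run through a sequence keeps the exceptional
null sets countable. -/

open MeasureTheory Filter Topology Complex

section PlaneWave

variable {n : ℕ}

noncomputable def planeWave (ζ : Fin n → ℂ) (h : ℝ) (y : Fin n → ℝ) : ℂ :=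
  cexp (-I * (∑ i, (y i : ℂ) * ζ i) / h)

theorem exists_hasFDerivAt_planeWave (ζ : Fin n → ℂ) (h : ℝ) :
    ∃ L : (Fin n → ℝ) →L[ℝ] ℂ, (∀ v, L v = -I * (∑ i, (v i : ℂ) * ζ i) / h) ∧
      ∀ x, HasFDerivAt (planeWave ζ h) (planeWave ζ h x • L) x := by
  set L : (Fin n → ℝ) →L[ℝ] ℂ := (-I / h) • ∑ i, (ContinuousLinearMap.proj i).smulRight (ζ i)
  have hL : ∀ v, L v = -I * (∑ i, (v i : ℂ) * ζ i) / h := fun v => by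
    simp only [L, smul_apply, sum_apply,
      ContinuousLinearMap.smulRight_apply, ContinuousLinearMap.proj_apply, Complex.real_smul,
      smul_eq_mul, Finset.mul_sum, Finset.sum_div]
    exact Finset.sum_congr rfl fun i _ => by ring
  have hwave : planeWave ζ h = fun y => cexp (L y) := funext fun y => by rw [hL]; rfl
  exact ⟨L, hL, fun x => hwave ▸ L.hasFDerivAt.cexp⟩

theorem fderiv_planeWave_add_apply (ζ : Fin n → ℂ) (h : ℝ) {w : (Fin n → ℝ) → ℂ}
    {x : Fin n → ℝ} (hw : DifferentiableAt ℝ w x) (j : Fin n) :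
    fderiv ℝ (fun y => planeWave ζ h y + w y) x (Pi.single j 1) =
      planeWave ζ h x * (-I * ζ j / h) + fderiv ℝ w x (Pi.single j 1) := by
  obtain ⟨L, hL, hderiv⟩ := exists_hasFDerivAt_planeWave ζ h
  rw [fderiv_fun_add (hderiv x).differentiableAt hw, (hderiv x).fderiv]
  simp [hL, Pi.single_apply, apply_ite]

theorem norm_planeWave (ζ : Fin n → ℂ) (h : ℝ) (x : Fin n → ℝ) :
    ‖planeWave ζ h x‖ = Real.exp ((∑ i, x i * (ζ i).im) / h) := by
  simp [planeWave, Complex.norm_exp, Complex.im_sum]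

theorem planeWave_mul_dotProduct_eq {ζ F : Fin n → ℂ} {g : ℂ} {h : ℝ} {w : (Fin n → ℝ) → ℂ}
    {x : Fin n → ℝ} (hh : h ≠ 0) (hw : DifferentiableAt ℝ w x)
    (hPDE : ∑ j, F j * (-I * fderiv ℝ (fun y => planeWave ζ h y + w y) x (Pi.single j 1)) +
      g * (planeWave ζ h x + w x) = 0) :
    planeWave ζ h x * ∑ j, F j * ζ j =
      h * (∑ j, F j * (-I * fderiv ℝ w x (Pi.single j 1)) + g * (planeWave ζ h x + w x)) := by
  set e := planeWave ζ h x
  have hsplit : ∑ j, F j * (-I * fderiv ℝ (fun y => planeWave ζ h y + w y) x (Pi.single j 1)) =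
      -(e / h) * ∑ j, F j * ζ j + ∑ j, F j * (-I * fderiv ℝ w x (Pi.single j 1)) := by
    rw [Finset.mul_sum, ← Finset.sum_add_distrib]
    refine Finset.sum_congr rfl fun j _ => ?_
    rw [fderiv_planeWave_add_apply ζ h hw]
    linear_combination (e * F j * ζ j / h) * I_sq
  have hinv : (h : ℂ) * (h : ℂ)⁻¹ = 1 := mul_inv_cancel₀ (ofReal_ne_zero.2 hh)
  rw [hsplit] at hPDE
  linear_combination -h * hPDE - (e * ∑ j, F j * ζ j) * hinv

theorem norm_apply_single_one_le {E : Type*} [NormedAddCommGroup E] [NormedSpace ℝ E]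
    (L : (Fin n → ℝ) →L[ℝ] E) (j : Fin n) : ‖L (Pi.single j 1)‖ ≤ ‖L‖ := by
  simpa [Pi.norm_single] using L.le_opNorm (Pi.single j 1)

theorem norm_dotProduct_le {ζ F : Fin n → ℂ} {g : ℂ} {h B : ℝ} {w : (Fin n → ℝ) → ℂ}
    {x : Fin n → ℝ} (hh : 0 < h) (hw : DifferentiableAt ℝ w x)
    (hB : ‖w x‖ + ‖fderiv ℝ w x‖ ≤ B)
    (hPDE : ∑ j, F j * (-I * fderiv ℝ (fun y => planeWave ζ h y + w y) x (Pi.single j 1)) +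
      g * (planeWave ζ h x + w x) = 0) :
    ‖∑ j, F j * ζ j‖ ≤
      h * ((∑ j, ‖F j‖ + ‖g‖) * B) * Real.exp (-(∑ i, x i * (ζ i).im) / h) + h * ‖g‖ := by
  rw [neg_div, Real.exp_neg, ← norm_planeWave]
  set e := planeWave ζ h x
  have he : 0 < ‖e‖ := norm_pos_iff.2 (Complex.exp_ne_zero _)
  have hDw : ‖∑ j, F j * (-I * fderiv ℝ w x (Pi.single j 1))‖ ≤ (∑ j, ‖F j‖) * B := by
    rw [Finset.sum_mul]
    refine (norm_sum_le _ _).trans (Finset.sum_le_sum fun j _ => ?_)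
    rw [norm_mul, norm_mul, norm_neg, norm_I, one_mul]
    gcongr
    linarith [norm_apply_single_one_le (fderiv ℝ w x) j, norm_nonneg (w x)]
  have hgw : ‖g * (e + w x)‖ ≤ ‖g‖ * B + ‖g‖ * ‖e‖ := by
    rw [norm_mul, ← mul_add]
    gcongr
    linarith [norm_add_le e (w x), norm_nonneg (fderiv ℝ w x)]
  have hmul : ‖e‖ * ‖∑ j, F j * ζ j‖ ≤ h * ((∑ j, ‖F j‖ + ‖g‖) * B + ‖g‖ * ‖e‖) := by
    rw [← norm_mul, planeWave_mul_dotProduct_eq hh.ne' hw hPDE, norm_mul, norm_real,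
      Real.norm_of_nonneg hh.le]
    gcongr
    linarith [norm_add_le (∑ j, F j * (-I * fderiv ℝ w x (Pi.single j 1))) (g * (e + w x))]
  calc ‖∑ j, F j * ζ j‖ ≤ h * ((∑ j, ‖F j‖ + ‖g‖) * B + ‖g‖ * ‖e‖) / ‖e‖ := by
        rwa [le_div_iff₀ he, mul_comm]
    _ = _ := by field_simp

end PlaneWave

theorem tendsto_one_add_inv_rpow_mul_exp_neg_div (N : ℝ) {a : ℝ} (ha : 0 < a) :
    Tendsto (fun h : ℝ => (1 + 1 / h) ^ N * Real.exp (-a / h)) (𝓝[>] 0) (𝓝 0) := by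
  have hdecay : Tendsto (fun t : ℝ => (1 + t) ^ N * Real.exp (-a * (1 + t))) atTop (𝓝 0) :=
    (tendsto_rpow_mul_exp_neg_mul_atTop_nhds_zero N a ha).comp
      (tendsto_atTop_add_const_left _ 1 tendsto_id)
  have hshift : ∀ t : ℝ, (1 + t) ^ N * Real.exp (-a * t) =
      Real.exp a * ((1 + t) ^ N * Real.exp (-a * (1 + t))) := fun t => by
    rw [mul_left_comm, ← Real.exp_add]; ring_nf
  have := ((hdecay.const_mul (Real.exp a)).congr fun t => (hshift t).symm).comp
    tendsto_inv_nhdsGT_zero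
  simpa [Function.comp_def, div_eq_mul_inv] using this

theorem tendsto_exp_decay_bound (K C M N : ℝ) {c s : ℝ} (hcs : 0 < c + s) :
    Tendsto (fun h : ℝ => h * (K * (C * (1 + 1 / h) ^ N * Real.exp (-c / h))) *
      Real.exp (-s / h) + h * M) (𝓝[>] 0) (𝓝 0) := by
  have hid : Tendsto (fun h : ℝ => h) (𝓝[>] 0) (𝓝 0) := nhdsWithin_le_nhds
  have hlim := ((hid.mul_const (K * C)).mul (tendsto_one_add_inv_rpow_mul_exp_neg_div N hcs)).add
    (hid.mul_const M)
  rw [zero_mul, zero_mul, zero_mul, zero_add] at hlim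
  refine hlim.congr fun h => ?_
  rw [neg_add, add_div, Real.exp_add]
  ring

/-- Let `n ≥ 2`, `Ω ⊂ ℝⁿ` open bounded, `c > 0`, and
`ζ = i e₁ + e₂ ∈ ℂⁿ`.  Let `F : Ω → ℂⁿ`, `g : Ω → ℂ` be measurable and
essentially bounded.  Suppose there are `C > 0`, `N ≥ 0` such that for every
`h ∈ (0,1)` there is a `C¹` function `w_h : ℝⁿ → ℂ` with
`sup_{x∈Ω} (|w_h(x)| + |∇w_h(x)|) ≤ C (1 + 1/h)^N e^{−c/h}`, and such that
`v_h(x) = exp(−i(x·ζ)/h) + w_h(x)` satisfies `F·Dv_h + g v_h = 0` a.e. in `Ω`.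
Then `F(x)·ζ = 0` for a.e. `x ∈ Ω` with `x₁ > −c`. -/
theorem local_vanishing_step (n : ℕ) (hn : 2 ≤ n)
    (Ω : Set (Fin n → ℝ)) (hΩ : IsOpen Ω)
    (c : ℝ)
    (ζ : Fin n → ℂ)
    (hζ : ζ = fun j : Fin n => if (j : ℕ) = 0 then Complex.I
      else if (j : ℕ) = 1 then 1 else 0)
    (F : (Fin n → ℝ) → (Fin n → ℂ)) (g : (Fin n → ℝ) → ℂ)
    (hex : ∃ C > (0 : ℝ), ∃ N : ℝ, 0 ≤ N ∧
      ∀ h : ℝ, h ∈ Set.Ioo (0 : ℝ) 1 →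
        ∃ w : (Fin n → ℝ) → ℂ, ContDiff ℝ 1 w ∧
          (∀ x ∈ Ω, ‖w x‖ + ‖fderiv ℝ w x‖ ≤
            C * (1 + 1 / h) ^ N * Real.exp (-c / h)) ∧
          (∀ᵐ x ∂(volume.restrict Ω),
            (∑ j, F x j * ((-Complex.I) * fderiv ℝ
                (fun y => Complex.exp
                    ((-Complex.I) * (∑ i, (y i : ℂ) * ζ i) / (h : ℂ)) + w y)
                x (Pi.single j (1 : ℝ))))
              + g x * (Complex.exp
                  ((-Complex.I) * (∑ i, (x i : ℂ) * ζ i) / (h : ℂ)) + w x)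
              = 0)) :
    ∀ᵐ x ∂(volume.restrict Ω),
      x (⟨0, by omega⟩ : Fin n) > -c → (∑ j, F x j * ζ j) = 0 := by
  obtain ⟨C, -, N, -, hsol⟩ := hex
  obtain ⟨u, -, hu_mem, hu_lim⟩ := exists_seq_strictAnti_tendsto' (zero_lt_one' ℝ)
  have hu : Tendsto u atTop (𝓝[>] 0) :=
    tendsto_nhdsWithin_iff.2 ⟨hu_lim, .of_forall fun k => (hu_mem k).1⟩
  choose w hw_smooth hw_bound hw_eq using fun k => hsol (u k) (hu_mem k)
  filter_upwards [ae_restrict_mem hΩ.measurableSet, ae_all_iff.2 hw_eq] with x hxΩ hx_eq hx₀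
  have him : ∑ i, x i * (ζ i).im = x ⟨0, by omega⟩ := by
    rw [Finset.sum_eq_single ⟨0, by omega⟩ (fun i _ hi => ?_) (by simp), hζ]
    · simp
    · have hi₀ : (i : ℕ) ≠ 0 := fun h => hi (Fin.ext h)
      simp only [hζ, hi₀, if_false]
      split_ifs <;> simp
  have hbound := (tendsto_exp_decay_bound (∑ j, ‖F x j‖ + ‖g x‖) C ‖g x‖ N
    (c := c) (s := ∑ i, x i * (ζ i).im) (by linarith)).comp hu
  refine norm_le_zero_iff.1 (ge_of_tendsto' hbound fun k => ?_)
  exact norm_dotProduct_le (hu_mem k).1 ((hw_smooth k).differentiable one_ne_zero x)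
    (hw_bound k x hxΩ) (hx_eq k)
end

section
/- Let Ω ⊆ ℝⁿ be open. Let A : ℝⁿ × ℂ → ℂⁿ and q : ℝⁿ × ℂ → ℂ be smooth (as functions of (x, z) ∈ ℝⁿ × ℝ², identifying ℂ ≅ ℝ²), with z ↦ A(x,z) and z ↦ q(x,z) entire holomorphic for each fixed x, and suppose A(x,0) = 0, q(x,0) = 0, and ∂_z q(x,0) = 0 for all x ∈ Ω. Let δ > 0 and let u : (−δ,δ)² × Ω → ℂ, (ε₁, ε₂, x) ↦ u(ε₁, ε₂, x), be smooth, with u(0, 0, x) = 0 for all x ∈ Ω, and suppose that for all (ε₁,ε₂) ∈ (−δ,δ)² the function u_ε := u(ε₁, ε₂, ·) satisfies −Δu_ε + D·(A(x,u_ε) u_ε) + A(x,u_ε)·(Du_ε) + (A(x,u_ε)·A(x,u_ε)) u_ε + q(x,u_ε) = 0 for all x ∈ Ω. Set v₁ := ∂_{ε₁} u|_{ε=0}, v₂ := ∂_{ε₂} u|_{ε=0}, and w := ∂_{ε₁}∂_{ε₂} u|_{ε=0}. Then for all x ∈ Ω: Δv₁(x) = 0, Δv₂(x) = 0, and −Δw(x)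 + Q⁽²⁾(v₁,v₂)(x) = 0, where Q⁽²⁾(v₁,v₂) := 3 ∂_z A(x,0)·(v₁ Dv₂ + v₂ Dv₁) + 2 (D_x·∂_z A(x,0)) v₁ v₂ + ∂²_z q(x,0) v₁ v₂. -/
open scoped BigOperators

open scoped ContDiff

noncomputable def pd {E : Type*} [NormedAddCommGroup E] [NormedSpace ℝ E]
    (v : E) (f : E → ℂ) : E → ℂ := fun p => fderiv ℝ f p v

namespace SL
variable {E : Type*} [NormedAddCommGroup E] [NormedSpace ℝ E]
variable {U : Set E} {f g : E → ℂ} {p v a b : E}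

theorem pd_congr (hU : IsOpen U) (h : ∀ y ∈ U, f y = g y) (hp : p ∈ U) (v : E) :
    pd v f p = pd v g p := by
  have hfg : f =ᶠ[nhds p] g := Filter.eventuallyEq_of_mem (hU.mem_nhds hp) h
  simp only [pd, hfg.fderiv_eq]

theorem contDiffOn_pd (hU : IsOpen U) (hf : ContDiffOn ℝ ∞ f U) (v : E) :
    ContDiffOn ℝ ∞ (pd v f) U :=
  (hf.fderiv_of_isOpen hU (by decide)).clm_apply contDiffOn_const

theorem diffAt (hU : IsOpen U) (hf : ContDiffOn ℝ ∞ f U) (hp : p ∈ U) :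
    DifferentiableAt ℝ f p :=
  (hf.contDiffAt (hU.mem_nhds hp)).differentiableAt (by decide)

theorem pd_comm (hU : IsOpen U) (hf : ContDiffOn ℝ ∞ f U) (hp : p ∈ U) (a b : E) :
    pd a (pd b f) p = pd b (pd a f) p := by
  have hc : ContDiffAt ℝ ∞ f p := hf.contDiffAt (hU.mem_nhds hp)
  have hsym := hc.isSymmSndFDerivAt (by simp; decide)
  have hd : DifferentiableAt ℝ (fderiv ℝ f) p :=
    (hc.fderiv_right (m := ∞) (by decide)).differentiableAt (by decide)
  have key : ∀ w c : E, fderiv ℝ (fun y => fderiv ℝ f y w) p c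
      = fderiv ℝ (fderiv ℝ f) p c w := by
    intro w c
    rw [fderiv_clm_apply hd (differentiableAt_const w)]
    simp
  show fderiv ℝ (fun y => fderiv ℝ f y b) p a = fderiv ℝ (fun y => fderiv ℝ f y a) p b
  rw [key b a, key a b, hsym.eq]

end SL

namespace SL
variable {E : Type*} [NormedAddCommGroup E] [NormedSpace ℝ E]
variable {f g : E → ℂ} {p : E}

theorem pd_mul (hf : DifferentiableAt ℝ f p) (hg : DifferentiableAt ℝ g p) (v : E) :
    pd v (fun y => f y * g y) p = f p * pd v g p + g p * pd v f p := by
  simp [pd, fderiv_fun_mul hf hg, smul_eq_mul]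

theorem pd_const_mul (hf : DifferentiableAt ℝ f p) (c : ℂ) (v : E) :
    pd v (fun y => c * f y) p = c * pd v f p := by
  simp [pd, fderiv_const_mul hf c, smul_eq_mul]

theorem pd_sum {ι : Type*} {s : Finset ι} {F : ι → E → ℂ}
    (h : ∀ i ∈ s, DifferentiableAt ℝ (F i) p) (v : E) :
    pd v (fun y => ∑ i ∈ s, F i y) p = ∑ i ∈ s, pd v (F i) p := by
  simp [pd, fderiv_fun_sum h]

theorem pd_add (hf : DifferentiableAt ℝ f p) (hg : DifferentiableAt ℝ g p) (v : E) :
    pd v (fun y => f y + g y) p = pd v f p + pd v g p := by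
  simp [pd, fderiv_fun_add hf hg]

theorem holo_fderiv_real {h : ℂ → ℂ} {z : ℂ} (hz : DifferentiableAt ℂ h z) (b : ℂ) :
    fderiv ℝ h z b = b * deriv h z := by
  rw [hz.fderiv_restrictScalars (𝕜 := ℝ)]
  show (fderiv ℂ h z) b = b * deriv h z
  rw [← fderiv_apply_one_eq_deriv]
  have h2 := (fderiv ℂ h z).map_smul b (1 : ℂ)
  simpa [smul_eq_mul] using h2

variable {n : ℕ}

theorem sliceX (g : ℝ × ℝ × (Fin n → ℝ) → ℂ) {a b : ℝ} {x : Fin n → ℝ}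
    (h : DifferentiableAt ℝ g (a, b, x)) (c : Fin n → ℝ) :
    fderiv ℝ (fun y => g (a, b, y)) x c = fderiv ℝ g (a, b, x) (0, 0, c) := by
  have hι : HasFDerivAt (fun y : Fin n → ℝ => ((a, b, y) : ℝ × ℝ × (Fin n → ℝ)))
      ((0 : (Fin n → ℝ) →L[ℝ] ℝ).prod ((0 : (Fin n → ℝ) →L[ℝ] ℝ).prod
        (ContinuousLinearMap.id ℝ (Fin n → ℝ)))) x :=
    (hasFDerivAt_const a x).prodMk ((hasFDerivAt_const b x).prodMk (hasFDerivAt_id x))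
  have hcomp := (h.hasFDerivAt.comp x hι).fderiv
  rw [show (fun y => g (a, b, y))
      = g ∘ (fun y : Fin n → ℝ => ((a, b, y) : ℝ × ℝ × (Fin n → ℝ))) from rfl, hcomp]
  rfl

theorem sliceT1 (g : ℝ × ℝ × (Fin n → ℝ) → ℂ) {b : ℝ} {x : Fin n → ℝ} {t : ℝ}
    (h : DifferentiableAt ℝ g (t, b, x)) :
    deriv (fun s : ℝ => g (s, b, x)) t = fderiv ℝ g (t, b, x) (1, 0, 0) := by
  have hι : HasDerivAt (fun s : ℝ => ((s, b, x) : ℝ × ℝ × (Fin n → ℝ))) (1, 0, 0) t :=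
    (hasDerivAt_id t).prodMk ((hasDerivAt_const t b).prodMk (hasDerivAt_const t x))
  exact (h.hasFDerivAt.comp_hasDerivAt t hι).deriv

theorem sliceT2 (g : ℝ × ℝ × (Fin n → ℝ) → ℂ) {a : ℝ} {x : Fin n → ℝ} {t : ℝ}
    (h : DifferentiableAt ℝ g (a, t, x)) :
    deriv (fun s : ℝ => g (a, s, x)) t = fderiv ℝ g (a, t, x) (0, 1, 0) := by
  have hι : HasDerivAt (fun s : ℝ => ((a, s, x) : ℝ × ℝ × (Fin n → ℝ))) (0, 1, 0) t :=
    (hasDerivAt_const t a).prodMk ((hasDerivAt_id t).prodMk (hasDerivAt_const t x))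
  exact (h.hasFDerivAt.comp_hasDerivAt t hι).deriv

theorem compChain (F : (Fin n → ℝ) × ℂ → ℂ) {u : ℝ × ℝ × (Fin n → ℝ) → ℂ}
    {p : ℝ × ℝ × (Fin n → ℝ)}
    (hF : DifferentiableAt ℝ F (p.2.2, u p)) (hu : DifferentiableAt ℝ u p)
    (v : ℝ × ℝ × (Fin n → ℝ)) :
    fderiv ℝ (fun p' => F (p'.2.2, u p')) p v
      = fderiv ℝ F (p.2.2, u p) (v.2.2, fderiv ℝ u p v) := by
  have hπ : HasFDerivAt (fun p' : ℝ × ℝ × (Fin n → ℝ) => p'.2.2)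
      ((ContinuousLinearMap.snd ℝ ℝ (Fin n → ℝ)).comp
        (ContinuousLinearMap.snd ℝ ℝ (ℝ × (Fin n → ℝ)))) p := by
    have h1 : HasFDerivAt (Prod.snd : ℝ × (ℝ × (Fin n → ℝ)) → ℝ × (Fin n → ℝ))
        (ContinuousLinearMap.snd ℝ ℝ (ℝ × (Fin n → ℝ))) p := hasFDerivAt_snd
    have h2 : HasFDerivAt (Prod.snd : ℝ × (Fin n → ℝ) → (Fin n → ℝ))
        (ContinuousLinearMap.snd ℝ ℝ (Fin n → ℝ)) p.2 := hasFDerivAt_snd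
    exact h2.comp p h1
  have hm : HasFDerivAt (fun p' : ℝ × ℝ × (Fin n → ℝ) => ((p'.2.2, u p') : (Fin n → ℝ) × ℂ))
      (((ContinuousLinearMap.snd ℝ ℝ (Fin n → ℝ)).comp
        (ContinuousLinearMap.snd ℝ ℝ (ℝ × (Fin n → ℝ)))).prod (fderiv ℝ u p)) p :=
    hπ.prodMk hu.hasFDerivAt
  have hcomp := (hF.hasFDerivAt.comp p hm).fderiv
  rw [show (fun p' => F (p'.2.2, u p'))
      = F ∘ (fun p' : ℝ × ℝ × (Fin n → ℝ) => ((p'.2.2, u p') : (Fin n → ℝ) × ℂ)) from rfl,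
    hcomp]
  rfl

theorem zslice (F : (Fin n → ℝ) × ℂ → ℂ) {x : Fin n → ℝ} {z0 : ℂ}
    (hF : DifferentiableAt ℝ F (x, z0))
    (hhol : DifferentiableAt ℂ (fun z : ℂ => F (x, z)) z0) (c : ℂ) :
    fderiv ℝ F (x, z0) (0, c) = c * deriv (fun z : ℂ => F (x, z)) z0 := by
  have hι : HasFDerivAt (fun z : ℂ => ((x, z) : (Fin n → ℝ) × ℂ))
      ((0 : ℂ →L[ℝ] (Fin n → ℝ)).prod (ContinuousLinearMap.id ℝ ℂ)) z0 :=
    (hasFDerivAt_const x z0).prodMk (hasFDerivAt_id z0)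
  have hcomp := (hF.hasFDerivAt.comp z0 hι).fderiv
  have h1 : fderiv ℝ (fun z : ℂ => F (x, z)) z0 c = fderiv ℝ F (x, z0) (0, c) := by
    rw [show (fun z : ℂ => F (x, z))
        = F ∘ (fun z : ℂ => ((x, z) : (Fin n → ℝ) × ℂ)) from rfl, hcomp]
    rfl
  rw [← h1, holo_fderiv_real hhol c]

end SL

namespace SL
variable {n : ℕ}

theorem entire_deriv {g : ℂ → ℂ} (hg : Differentiable ℂ g) : Differentiable ℂ (deriv g) :=
  Complex.analyticOnNhd_univ_iff_differentiable.1
    ((Complex.analyticOnNhd_univ_iff_differentiable.2 hg).deriv)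

theorem zslice2 (F : (Fin n → ℝ) × ℂ → ℂ) (hF : ContDiff ℝ ∞ F) (x : Fin n → ℝ)
    (hhol : Differentiable ℂ (fun z : ℂ => F (x, z))) (a b : ℂ) :
    fderiv ℝ (fderiv ℝ F) (x, 0) (0, b) (0, a)
      = a * b * deriv (fun z : ℂ => deriv (fun z' : ℂ => F (x, z')) z) 0 := by
  have hF1 : ContDiff ℝ ∞ (fderiv ℝ F) := hF.fderiv_right (m := ∞) (by decide)
  have hι : HasFDerivAt (fun z : ℂ => ((x, z) : (Fin n → ℝ) × ℂ))
      ((0 : ℂ →L[ℝ] (Fin n → ℝ)).prod (ContinuousLinearMap.id ℝ ℂ)) 0 :=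
    (hasFDerivAt_const x 0).prodMk (hasFDerivAt_id 0)
  have hΨ : HasFDerivAt (fun z : ℂ => fderiv ℝ F (x, z))
      ((fderiv ℝ (fderiv ℝ F) (x, 0)).comp
        ((0 : ℂ →L[ℝ] (Fin n → ℝ)).prod (ContinuousLinearMap.id ℝ ℂ))) 0 :=
    ((hF1.differentiable (by decide)) (x, 0)).hasFDerivAt.comp 0 hι
  -- step 1 : derivative of Φ := fun z => fderiv ℝ F (x,z) (0,a)
  have step1 : fderiv ℝ (fun z : ℂ => fderiv ℝ F (x, z) (0, a)) 0 b
      = fderiv ℝ (fderiv ℝ F) (x, 0) (0, b) (0, a) := by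
    rw [fderiv_clm_apply hΨ.differentiableAt (differentiableAt_const ((0 : Fin n → ℝ), a))]
    simp only [hΨ.fderiv]
    simp
  -- step 2 : Φ = fun z => a * deriv g z
  have step2 : (fun z : ℂ => fderiv ℝ F (x, z) (0, a))
      = fun z : ℂ => a * deriv (fun z' : ℂ => F (x, z')) z := by
    funext z
    exact zslice F (hF.differentiable (by decide) (x, z)) (hhol z) a
  have hg' : Differentiable ℂ (deriv (fun z' : ℂ => F (x, z'))) := entire_deriv hhol
  have step3 : fderiv ℝ (fun z : ℂ => a * deriv (fun z' : ℂ => F (x, z')) z) 0 b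
      = a * (b * deriv (fun z : ℂ => deriv (fun z' : ℂ => F (x, z')) z) 0) := by
    rw [show (fun z : ℂ => deriv (fun z' : ℂ => F (x, z')) z)
        = deriv (fun z' : ℂ => F (x, z')) from rfl]
    have hd : DifferentiableAt ℝ (deriv (fun z' : ℂ => F (x, z'))) 0 :=
      (hg' 0).restrictScalars ℝ
    rw [show fderiv ℝ (fun z : ℂ => a * deriv (fun z' : ℂ => F (x, z')) z) 0
        = fderiv ℝ (fun z : ℂ => a * deriv (fun z' : ℂ => F (x, z')) z) 0 from rfl,
      fderiv_const_mul hd a]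
    simp only [ContinuousLinearMap.smul_apply, smul_eq_mul]
    rw [holo_fderiv_real (hg' 0) b]
  rw [← step1, step2, step3]
  ring

end SL

namespace SL
variable {n : ℕ}

def dir1 (n : ℕ) : ℝ × ℝ × (Fin n → ℝ) := (1, 0, 0)
def dir2 (n : ℕ) : ℝ × ℝ × (Fin n → ℝ) := (0, 1, 0)
def dirx {n : ℕ} (j : Fin n) : ℝ × ℝ × (Fin n → ℝ) := (0, 0, Pi.single j 1)

theorem diff_slice {g : ℝ × ℝ × (Fin n → ℝ) → ℂ} {a b : ℝ} {y : Fin n → ℝ}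
    (h : DifferentiableAt ℝ g (a, b, y)) :
    DifferentiableAt ℝ (fun y' => g (a, b, y')) y :=
  h.comp y ((differentiableAt_const a).prodMk
    ((differentiableAt_const b).prodMk differentiableAt_id))

/-- value of the derivative of a composite `p ↦ F (p.2.2, u p)` at a base point
of the slice, in a direction with vanishing `x`-component. -/
theorem pd_acomp (F : (Fin n → ℝ) × ℂ → ℂ) (hF : ContDiff ℝ ∞ F)
    {u : ℝ × ℝ × (Fin n → ℝ) → ℂ} {y : Fin n → ℝ}
    (hud : DifferentiableAt ℝ u (0, 0, y)) (hu0 : u (0, 0, y) = 0)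
    (hhol : DifferentiableAt ℂ (fun z : ℂ => F (y, z)) 0)
    (v : ℝ × ℝ × (Fin n → ℝ)) (hv : v.2.2 = 0) :
    pd v (fun p => F (p.2.2, u p)) (0, 0, y)
      = pd v u (0, 0, y) * deriv (fun z : ℂ => F (y, z)) 0 := by
  have h1 := compChain F (p := ((0,0,y) : ℝ × ℝ × (Fin n → ℝ)))
    ((hF.differentiable (by decide)).differentiableAt) hud v
  show fderiv ℝ (fun p => F (p.2.2, u p)) (0, 0, y) v = _
  rw [h1]
  show fderiv ℝ F (y, u (0, 0, y)) (v.2.2, fderiv ℝ u (0, 0, y) v) = _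
  rw [hv, hu0]
  exact zslice F ((hF.differentiable (by decide)).differentiableAt) hhol _

/-- second-order derivative of the `q`-term. -/
theorem pd_qterm {q : (Fin n → ℝ) × ℂ → ℂ} (hq : ContDiff ℝ ∞ q)
    {u ψ : ℝ × ℝ × (Fin n → ℝ) → ℂ} {x : Fin n → ℝ}
    (hud : DifferentiableAt ℝ u (0, 0, x)) (hu0 : u (0, 0, x) = 0)
    (hψd : DifferentiableAt ℝ ψ (0, 0, x))
    (hqhol : Differentiable ℂ (fun z : ℂ => q (x, z)))
    (hq1 : deriv (fun z : ℂ => q (x, z)) 0 = 0)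
    (v : ℝ × ℝ × (Fin n → ℝ)) (hv : v.2.2 = 0) :
    pd v (fun p => fderiv ℝ q (p.2.2, u p) ((0 : Fin n → ℝ), ψ p)) (0, 0, x)
      = ψ (0, 0, x) * pd v u (0, 0, x)
        * deriv (fun z : ℂ => deriv (fun z' : ℂ => q (x, z')) z) 0 := by
  set p0 : ℝ × ℝ × (Fin n → ℝ) := (0, 0, x) with hp0
  have hq' : ContDiff ℝ ∞ (fderiv ℝ q) := hq.fderiv_right (m := ∞) (by decide)
  have hπ : HasFDerivAt (fun p' : ℝ × ℝ × (Fin n → ℝ) => p'.2.2)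
      ((ContinuousLinearMap.snd ℝ ℝ (Fin n → ℝ)).comp
        (ContinuousLinearMap.snd ℝ ℝ (ℝ × (Fin n → ℝ)))) p0 := by
    have h1 : HasFDerivAt (Prod.snd : ℝ × (ℝ × (Fin n → ℝ)) → ℝ × (Fin n → ℝ))
        (ContinuousLinearMap.snd ℝ ℝ (ℝ × (Fin n → ℝ))) p0 := hasFDerivAt_snd
    have h2 : HasFDerivAt (Prod.snd : ℝ × (Fin n → ℝ) → (Fin n → ℝ))
        (ContinuousLinearMap.snd ℝ ℝ (Fin n → ℝ)) p0.2 := hasFDerivAt_snd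
    exact h2.comp p0 h1
  have hm : HasFDerivAt (fun p' : ℝ × ℝ × (Fin n → ℝ) => ((p'.2.2, u p') : (Fin n → ℝ) × ℂ))
      (((ContinuousLinearMap.snd ℝ ℝ (Fin n → ℝ)).comp
        (ContinuousLinearMap.snd ℝ ℝ (ℝ × (Fin n → ℝ)))).prod (fderiv ℝ u p0)) p0 :=
    hπ.prodMk hud.hasFDerivAt
  have hB : HasFDerivAt (fun p' => fderiv ℝ q (p'.2.2, u p'))
      ((fderiv ℝ (fderiv ℝ q) (p0.2.2, u p0)).comp
        (((ContinuousLinearMap.snd ℝ ℝ (Fin n → ℝ)).comp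
          (ContinuousLinearMap.snd ℝ ℝ (ℝ × (Fin n → ℝ)))).prod (fderiv ℝ u p0))) p0 :=
    ((hq'.differentiable (by decide)) _).hasFDerivAt.comp p0 hm
  have hΨ : DifferentiableAt ℝ (fun p' => (((0 : Fin n → ℝ), ψ p') : (Fin n → ℝ) × ℂ)) p0 :=
    (differentiableAt_const _).prodMk hψd
  show fderiv ℝ (fun p' => fderiv ℝ q (p'.2.2, u p') ((0 : Fin n → ℝ), ψ p')) p0 v = _
  rw [fderiv_clm_apply hB.differentiableAt hΨ]
  simp only [ContinuousLinearMap.add_apply, ContinuousLinearMap.comp_apply,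
    ContinuousLinearMap.flip_apply, hB.fderiv]
  have hΨfd : fderiv ℝ (fun p' => (((0 : Fin n → ℝ), ψ p') : (Fin n → ℝ) × ℂ)) p0 v
      = ((0 : Fin n → ℝ), fderiv ℝ ψ p0 v) := by
    rw [((hasFDerivAt_const (0 : Fin n → ℝ) p0).prodMk hψd.hasFDerivAt).fderiv]
    rfl
  have e1 : (fderiv ℝ q (p0.2.2, u p0)) (fderiv ℝ (fun p' =>
      (((0 : Fin n → ℝ), ψ p') : (Fin n → ℝ) × ℂ)) p0 v) = 0 := by
    rw [hΨfd]
    have : (p0.2.2, u p0) = ((x, 0) : (Fin n → ℝ) × ℂ) := by rw [hu0]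
    rw [this, zslice q ((hq.differentiable (by decide)).differentiableAt) (hqhol 0) _, hq1,
      mul_zero]
  have e2 : ((((ContinuousLinearMap.snd ℝ ℝ (Fin n → ℝ)).comp
      (ContinuousLinearMap.snd ℝ ℝ (ℝ × (Fin n → ℝ)))).prod (fderiv ℝ u p0)) v)
      = ((0 : Fin n → ℝ), fderiv ℝ u p0 v) := by
    have : ((ContinuousLinearMap.snd ℝ ℝ (Fin n → ℝ)).comp
        (ContinuousLinearMap.snd ℝ ℝ (ℝ × (Fin n → ℝ)))) v = v.2.2 := rfl
    simp [ContinuousLinearMap.prod_apply, this, hv]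
  rw [e1, e2]
  have : (p0.2.2, u p0) = ((x, 0) : (Fin n → ℝ) × ℂ) := by rw [hu0]
  rw [this, zslice2 q hq x hqhol (ψ p0) (fderiv ℝ u p0 v)]
  show 0 + ψ p0 * fderiv ℝ u p0 v * _ = _
  simp only [pd]
  ring

end SL

namespace SL
/-- The nonlinearity composites as functions on `ℝ × ℝ × ℝⁿ`. -/
def acf {n : ℕ} (A : (Fin n → ℝ) × ℂ → (Fin n → ℂ)) (u : ℝ × ℝ × (Fin n → ℝ) → ℂ)
    (j : Fin n) : ℝ × ℝ × (Fin n → ℝ) → ℂ := fun p => A (p.2.2, u p) j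
noncomputable def gff {n : ℕ} (A : (Fin n → ℝ) × ℂ → (Fin n → ℂ)) (u : ℝ × ℝ × (Fin n → ℝ) → ℂ)
    (j : Fin n) : ℝ × ℝ × (Fin n → ℝ) → ℂ := fun p => acf A u j p * u p
def qcf {n : ℕ} (q : (Fin n → ℝ) × ℂ → ℂ) (u : ℝ × ℝ × (Fin n → ℝ) → ℂ) :
    ℝ × ℝ × (Fin n → ℝ) → ℂ := fun p => q (p.2.2, u p)
noncomputable def sff {n : ℕ} (A : (Fin n → ℝ) × ℂ → (Fin n → ℂ)) (u : ℝ × ℝ × (Fin n → ℝ) → ℂ) :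
    ℝ × ℝ × (Fin n → ℝ) → ℂ := fun p => ∑ j, acf A u j p * acf A u j p
noncomputable def xff {n : ℕ} (A : (Fin n → ℝ) × ℂ → (Fin n → ℂ)) (q : (Fin n → ℝ) × ℂ → ℂ)
    (u : ℝ × ℝ × (Fin n → ℝ) → ℂ) : ℝ × ℝ × (Fin n → ℝ) → ℂ := fun p =>
  (-Complex.I) * (∑ j, pd (dirx j) (gff A u j) p)
    + ((∑ j, acf A u j p * ((-Complex.I) * pd (dirx j) u p))
      + (sff A u p * u p + qcf q u p))
end SL



/-- second-order linearization of the nonlinear magnetic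
Schrödinger equation around the zero solution.  With `A`, `q` smooth, entire
holomorphic in `z`, `A(x,0) = 0`, `q(x,0) = 0`, `∂_z q(x,0) = 0` on `Ω`, and
`u : (−δ,δ)² × Ω → ℂ` a smooth family of solutions with `u(0,0,·) = 0`, the
first linearizations `v₁ = ∂_{ε₁}u|_{ε=0}`, `v₂ = ∂_{ε₂}u|_{ε=0}` are harmonic
on `Ω` and the second linearization `w = ∂_{ε₁}∂_{ε₂}u|_{ε=0}` satisfies
`−Δw + Q⁽²⁾(v₁,v₂) = 0` on `Ω`, where
`Q⁽²⁾(v₁,v₂) = 3 ∂_z A(x,0)·(v₁ Dv₂ + v₂ Dv₁) + 2(D_x·∂_z A(x,0)) v₁v₂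
  + ∂²_z q(x,0) v₁v₂` (with `D = −i∇` and the bilinear dot product). -/
theorem second_linearization (n : ℕ)
    (Ω : Set (Fin n → ℝ)) (hΩ : IsOpen Ω)
    (A : (Fin n → ℝ) × ℂ → (Fin n → ℂ)) (q : (Fin n → ℝ) × ℂ → ℂ)
    (hAsmooth : ContDiff ℝ (⊤ : ℕ∞) A) (hqsmooth : ContDiff ℝ (⊤ : ℕ∞) q)
    (hAhol : ∀ x : Fin n → ℝ, Differentiable ℂ (fun z : ℂ => A (x, z)))
    (hqhol : ∀ x : Fin n → ℝ, Differentiable ℂ (fun z : ℂ => q (x, z)))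
    (hA0 : ∀ x ∈ Ω, A (x, 0) = 0)
    (hq0 : ∀ x ∈ Ω, q (x, 0) = 0)
    (hq1 : ∀ x ∈ Ω, deriv (fun z : ℂ => q (x, z)) 0 = 0)
    (δ : ℝ) (hδ : 0 < δ)
    (u : ℝ × ℝ × (Fin n → ℝ) → ℂ)
    (husmooth : ContDiffOn ℝ (⊤ : ℕ∞) u (Set.Ioo (-δ) δ ×ˢ Set.Ioo (-δ) δ ×ˢ Ω))
    (hu0 : ∀ x ∈ Ω, u (0, 0, x) = 0)
    (hPDE : ∀ ε₁ ∈ Set.Ioo (-δ) δ, ∀ ε₂ ∈ Set.Ioo (-δ) δ, ∀ x ∈ Ω,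
      -(∑ j, fderiv ℝ
          (fun y => fderiv ℝ (fun z => u (ε₁, ε₂, z)) y (Pi.single j (1 : ℝ))) x
          (Pi.single j (1 : ℝ)))
        + (-Complex.I) * (∑ j, fderiv ℝ
            (fun y => A (y, u (ε₁, ε₂, y)) j * u (ε₁, ε₂, y)) x
            (Pi.single j (1 : ℝ)))
        + (∑ j, A (x, u (ε₁, ε₂, x)) j *
            ((-Complex.I) * fderiv ℝ (fun z => u (ε₁, ε₂, z)) x
              (Pi.single j (1 : ℝ))))
        + (∑ j, A (x, u (ε₁, ε₂, x)) j * A (x, u (ε₁, ε₂, x)) j) * u (ε₁, ε₂, x)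
        + q (x, u (ε₁, ε₂, x)) = 0)
    (v₁ v₂ w : (Fin n → ℝ) → ℂ)
    (hv₁ : v₁ = fun x => deriv (fun ε₁ : ℝ => u (ε₁, 0, x)) 0)
    (hv₂ : v₂ = fun x => deriv (fun ε₂ : ℝ => u (0, ε₂, x)) 0)
    (hw : w = fun x =>
      deriv (fun ε₁ : ℝ => deriv (fun ε₂ : ℝ => u (ε₁, ε₂, x)) 0) 0) :
    ∀ x ∈ Ω,
      (∑ j, fderiv ℝ (fun y => fderiv ℝ v₁ y (Pi.single j (1 : ℝ))) x
          (Pi.single j (1 : ℝ))) = 0 ∧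
      (∑ j, fderiv ℝ (fun y => fderiv ℝ v₂ y (Pi.single j (1 : ℝ))) x
          (Pi.single j (1 : ℝ))) = 0 ∧
      -(∑ j, fderiv ℝ (fun y => fderiv ℝ w y (Pi.single j (1 : ℝ))) x
          (Pi.single j (1 : ℝ)))
        + (3 * (∑ j, deriv (fun z : ℂ => A (x, z) j) 0 *
              (v₁ x * ((-Complex.I) * fderiv ℝ v₂ x (Pi.single j (1 : ℝ)))
                + v₂ x * ((-Complex.I) * fderiv ℝ v₁ x (Pi.single j (1 : ℝ)))))
            + 2 * ((-Complex.I) * (∑ j, fderiv ℝ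
                (fun y => deriv (fun z : ℂ => A (y, z) j) 0) x
                (Pi.single j (1 : ℝ)))) * (v₁ x * v₂ x)
            + deriv (fun z : ℂ => deriv (fun z' : ℂ => q (x, z')) z) 0
              * (v₁ x * v₂ x)) = 0 := by
  
  intro x hx
  -- ## Setup
  set U : Set (ℝ × ℝ × (Fin n → ℝ)) := Set.Ioo (-δ) δ ×ˢ Set.Ioo (-δ) δ ×ˢ Ω with hUdef
  have hUo : IsOpen U := isOpen_Ioo.prod (isOpen_Ioo.prod hΩ)
  have h0δ : (0 : ℝ) ∈ Set.Ioo (-δ) δ := ⟨by linarith, hδ⟩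
  have hmem : ∀ y ∈ Ω, ((0 : ℝ), (0 : ℝ), y) ∈ U := fun y hy => ⟨h0δ, h0δ, hy⟩
  have husm : ContDiffOn ℝ ∞ u U := husmooth.of_le (by simp)
  have hqS : ContDiff ℝ ∞ q := hqsmooth.of_le (by simp)
  have hAj : ∀ j : Fin n, ContDiff ℝ ∞ (fun pr : (Fin n → ℝ) × ℂ => A pr j) :=
    fun j => (contDiff_pi.1 hAsmooth j).of_le (by simp)
  have hAjhol : ∀ (j : Fin n) (y : Fin n → ℝ),
      Differentiable ℂ (fun z : ℂ => A (y, z) j) :=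
    fun j y =>
      (ContinuousLinearMap.proj (R := ℂ) (φ := fun _ : Fin n => ℂ) j).differentiable.comp
        (hAhol y)
  -- composite smoothness
  have hmsm : ContDiffOn ℝ ∞
      (fun p : ℝ × ℝ × (Fin n → ℝ) => ((p.2.2, u p) : (Fin n → ℝ) × ℂ)) U :=
    ((contDiff_snd.comp contDiff_snd).contDiffOn).prodMk husm
  have hacs : ∀ j, ContDiffOn ℝ ∞ (SL.acf A u j) U := fun j => (hAj j).comp_contDiffOn hmsm
  have hGs : ∀ j, ContDiffOn ℝ ∞ (SL.gff A u j) U := fun j => (hacs j).mul husm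
  have hqcs : ContDiffOn ℝ ∞ (SL.qcf q u) U := hqS.comp_contDiffOn hmsm
  have hSs : ContDiffOn ℝ ∞ (SL.sff A u) U :=
    ContDiffOn.sum (fun j _ => (hacs j).mul (hacs j))
  -- ## slice values
  have sval_ac : ∀ (j : Fin n), ∀ y ∈ Ω, SL.acf A u j (0, 0, y) = 0 := by
    intro j y hy
    show A (y, u (0, 0, y)) j = 0
    rw [hu0 y hy, hA0 y hy]
    rfl
  have sval_S : ∀ y ∈ Ω, SL.sff A u (0, 0, y) = 0 := by
    intro y hy
    exact Finset.sum_eq_zero (fun j _ => by rw [sval_ac j y hy]; ring)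
  have sval_pdx_u : ∀ (j : Fin n), ∀ y ∈ Ω, pd (SL.dirx j) u (0, 0, y) = 0 := by
    intro j y hy
    have h1 := SL.sliceX u (a := 0) (b := 0) (SL.diffAt hUo husm (hmem y hy)) (Pi.single j 1)
    have h2 : (fun y' => u (0, 0, y')) =ᶠ[nhds y] (fun _ => (0 : ℂ)) :=
      Filter.eventuallyEq_of_mem (hΩ.mem_nhds hy) (fun y' hy' => hu0 y' hy')
    show fderiv ℝ u (0, 0, y) (SL.dirx j) = 0
    rw [show SL.dirx j = ((0 : ℝ), (0 : ℝ), Pi.single j (1 : ℝ)) from rfl, ← h1, h2.fderiv_eq]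
    simp
  have sval_v1 : ∀ y ∈ Ω, v₁ y = pd (SL.dir1 n) u (0, 0, y) := by
    intro y hy
    rw [hv₁]
    exact SL.sliceT1 u (SL.diffAt hUo husm (hmem y hy))
  have sval_v2 : ∀ y ∈ Ω, v₂ y = pd (SL.dir2 n) u (0, 0, y) := by
    intro y hy
    rw [hv₂]
    exact SL.sliceT2 u (SL.diffAt hUo husm (hmem y hy))
  have hpd2sm : ContDiffOn ℝ ∞ (pd (SL.dir2 n) u) U := SL.contDiffOn_pd hUo husm _
  have sval_w : ∀ y ∈ Ω, w y = pd (SL.dir1 n) (pd (SL.dir2 n) u) (0, 0, y) := by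
    intro y hy
    rw [hw]
    have h1 : (fun t : ℝ => deriv (fun s : ℝ => u (t, s, y)) 0)
        =ᶠ[nhds (0 : ℝ)] (fun t : ℝ => pd (SL.dir2 n) u (t, 0, y)) := by
      filter_upwards [isOpen_Ioo.mem_nhds h0δ] with t ht
      exact SL.sliceT2 u (SL.diffAt hUo husm ⟨ht, h0δ, hy⟩)
    show deriv (fun t : ℝ => deriv (fun s : ℝ => u (t, s, y)) 0) 0 = _
    rw [h1.deriv_eq]
    exact SL.sliceT1 (pd (SL.dir2 n) u) (SL.diffAt hUo hpd2sm (hmem y hy))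
  -- derivative of `acf`/`qcf` in slice directions at base points
  have sval_pdac : ∀ (j : Fin n) (vd : ℝ × ℝ × (Fin n → ℝ)), vd.2.2 = 0 → ∀ y ∈ Ω,
      pd vd (SL.acf A u j) (0, 0, y)
        = pd vd u (0, 0, y) * deriv (fun z : ℂ => A (y, z) j) 0 := by
    intro j vd hvd y hy
    exact SL.pd_acomp (fun pr => A pr j) (hAj j) (SL.diffAt hUo husm (hmem y hy))
      (hu0 y hy) ((hAjhol j y) 0) vd hvd
  -- ## fderiv transfer from Ω to slice
  have fd_v : ∀ (f : (ℝ × ℝ × (Fin n → ℝ)) → ℂ), ContDiffOn ℝ ∞ f U →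
      ∀ (vf : (Fin n → ℝ) → ℂ), (∀ y ∈ Ω, vf y = f (0, 0, y)) →
      ∀ y ∈ Ω, ∀ j : Fin n,
        fderiv ℝ vf y (Pi.single j 1) = pd (SL.dirx j) f (0, 0, y) := by
    intro f hf vf hvf y hy j
    have h2 : vf =ᶠ[nhds y] (fun y' => f (0, 0, y')) :=
      Filter.eventuallyEq_of_mem (hΩ.mem_nhds hy) hvf
    rw [h2.fderiv_eq]
    exact SL.sliceX f (SL.diffAt hUo hf (hmem y hy)) _
  have lap_v : ∀ (f : (ℝ × ℝ × (Fin n → ℝ)) → ℂ), ContDiffOn ℝ ∞ f U →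
      ∀ (vf : (Fin n → ℝ) → ℂ), (∀ y ∈ Ω, vf y = f (0, 0, y)) →
      ∀ j : Fin n,
        fderiv ℝ (fun y => fderiv ℝ vf y (Pi.single j 1)) x (Pi.single j 1)
          = pd (SL.dirx j) (pd (SL.dirx j) f) (0, 0, x) := by
    intro f hf vf hvf j
    have h2 : (fun y => fderiv ℝ vf y (Pi.single j 1))
        =ᶠ[nhds x] (fun y => pd (SL.dirx j) f (0, 0, y)) :=
      Filter.eventuallyEq_of_mem (hΩ.mem_nhds hx) (fun y hy => fd_v f hf vf hvf y hy j)
    rw [h2.fderiv_eq]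
    exact SL.sliceX (pd (SL.dirx j) f)
      (SL.diffAt hUo (SL.contDiffOn_pd hUo hf _) (hmem x hx)) _
  -- ## the PDE in interior-derivative form
  have hLap : ∀ p ∈ U, (∑ j, pd (SL.dirx j) (pd (SL.dirx j) u) p) = SL.xff A q u p := by
    rintro ⟨e1, e2, y⟩ hp
    have he1 : e1 ∈ Set.Ioo (-δ) δ := hp.1
    have he2 : e2 ∈ Set.Ioo (-δ) δ := hp.2.1
    have hy : y ∈ Ω := hp.2.2
    have HP := hPDE e1 he1 e2 he2 y hy
    have c1 : ∀ j : Fin n,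
        fderiv ℝ (fun y' => fderiv ℝ (fun z => u (e1, e2, z)) y' (Pi.single j (1 : ℝ))) y
          (Pi.single j (1 : ℝ)) = pd (SL.dirx j) (pd (SL.dirx j) u) (e1, e2, y) := by
      intro j
      have h2 : (fun y' => fderiv ℝ (fun z => u (e1, e2, z)) y' (Pi.single j (1 : ℝ)))
          =ᶠ[nhds y] (fun y' => pd (SL.dirx j) u (e1, e2, y')) := by
        filter_upwards [hΩ.mem_nhds hy] with y' hy'
        exact SL.sliceX u (SL.diffAt hUo husm ⟨he1, he2, hy'⟩) _
      rw [h2.fderiv_eq]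
      exact SL.sliceX (pd (SL.dirx j) u)
        (SL.diffAt hUo (SL.contDiffOn_pd hUo husm _) ⟨he1, he2, hy⟩) _
    have c2 : ∀ j : Fin n,
        fderiv ℝ (fun y' => A (y', u (e1, e2, y')) j * u (e1, e2, y')) y
          (Pi.single j (1 : ℝ)) = pd (SL.dirx j) (SL.gff A u j) (e1, e2, y) :=
      fun j => SL.sliceX (SL.gff A u j) (SL.diffAt hUo (hGs j) ⟨he1, he2, hy⟩) _
    have c3 : ∀ j : Fin n,
        fderiv ℝ (fun z => u (e1, e2, z)) y (Pi.single j (1 : ℝ))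
          = pd (SL.dirx j) u (e1, e2, y) :=
      fun j => SL.sliceX u (SL.diffAt hUo husm ⟨he1, he2, hy⟩) _
    have c4 : ∀ j : Fin n, A (y, u (e1, e2, y)) j = SL.acf A u j (e1, e2, y) := fun _ => rfl
    have c5 : q (y, u (e1, e2, y)) = SL.qcf q u (e1, e2, y) := rfl
    simp only [c1] at HP
    simp only [c2] at HP
    simp only [c3] at HP
    simp only [c4, c5] at HP
    show _ = (-Complex.I) * (∑ j, pd (SL.dirx j) (SL.gff A u j) (e1, e2, y))
      + ((∑ j, SL.acf A u j (e1, e2, y)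
            * ((-Complex.I) * pd (SL.dirx j) u (e1, e2, y)))
        + ((∑ j, SL.acf A u j (e1, e2, y) * SL.acf A u j (e1, e2, y)) * u (e1, e2, y)
          + SL.qcf q u (e1, e2, y)))
    linear_combination -HP
  -- ## first linearization : the right-hand side has vanishing ε-derivatives on the slice
  have K1 : ∀ vd : ℝ × ℝ × (Fin n → ℝ), vd.2.2 = 0 → ∀ y ∈ Ω,
      pd vd (SL.xff A q u) (0, 0, y) = 0 := by
    intro vd hvd y hy
    have hyU := hmem y hy
    have d_u := SL.diffAt hUo husm hyU
    have d_pdxu : ∀ j : Fin n, DifferentiableAt ℝ (pd (SL.dirx j) u) ((0:ℝ), (0:ℝ), y) :=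
      fun j => SL.diffAt hUo (SL.contDiffOn_pd hUo husm _) hyU
    have d_ac : ∀ j, DifferentiableAt ℝ (SL.acf A u j) ((0:ℝ), (0:ℝ), y) :=
      fun j => SL.diffAt hUo (hacs j) hyU
    have d_pdG : ∀ j, DifferentiableAt ℝ (pd (SL.dirx j) (SL.gff A u j)) ((0:ℝ), (0:ℝ), y) :=
      fun j => SL.diffAt hUo (SL.contDiffOn_pd hUo (hGs j) _) hyU
    have d_S := SL.diffAt hUo hSs hyU
    have d_qc := SL.diffAt hUo hqcs hyU
    have e0 : pd vd (SL.xff A q u) (0, 0, y)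
        = pd vd (fun p => (-Complex.I) * (∑ j, pd (SL.dirx j) (SL.gff A u j) p)) (0, 0, y)
          + (pd vd (fun p => ∑ j, SL.acf A u j p * ((-Complex.I) * pd (SL.dirx j) u p))
              (0, 0, y)
            + (pd vd (fun p => SL.sff A u p * u p) (0, 0, y)
              + pd vd (SL.qcf q u) (0, 0, y))) := by
      rw [show SL.xff A q u = fun p =>
        ((-Complex.I) * (∑ j, pd (SL.dirx j) (SL.gff A u j) p))
          + ((∑ j, SL.acf A u j p * ((-Complex.I) * pd (SL.dirx j) u p))
            + (SL.sff A u p * u p + SL.qcf q u p)) from rfl]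
      rw [SL.pd_add ((differentiableAt_const (-Complex.I)).fun_mul
          (DifferentiableAt.fun_sum (fun j _ => d_pdG j)))
        ((DifferentiableAt.fun_sum (fun j _ => (d_ac j).fun_mul
            ((differentiableAt_const (-Complex.I)).fun_mul (d_pdxu j)))).fun_add
          ((d_S.fun_mul d_u).fun_add d_qc)) vd]
      rw [SL.pd_add (DifferentiableAt.fun_sum (fun j _ => (d_ac j).fun_mul
          ((differentiableAt_const (-Complex.I)).fun_mul (d_pdxu j))))
        ((d_S.fun_mul d_u).fun_add d_qc) vd]
      rw [SL.pd_add (d_S.fun_mul d_u) d_qc vd]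
    have t1 : pd vd (fun p => (-Complex.I) * (∑ j, pd (SL.dirx j) (SL.gff A u j) p))
        (0, 0, y) = 0 := by
      rw [SL.pd_const_mul (DifferentiableAt.fun_sum (fun j _ => d_pdG j)) (-Complex.I) vd,
        SL.pd_sum (fun j _ => d_pdG j) vd]
      have hz : ∀ j : Fin n, pd vd (pd (SL.dirx j) (SL.gff A u j)) (0, 0, y) = 0 := by
        intro j
        rw [SL.pd_comm hUo (hGs j) hyU vd (SL.dirx j)]
        have hin : ∀ y' ∈ Ω, pd vd (SL.gff A u j) (0, 0, y') = 0 := by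
          intro y' hy'
          have hm := SL.pd_mul (f := SL.acf A u j) (g := u)
            (SL.diffAt hUo (hacs j) (hmem y' hy')) (SL.diffAt hUo husm (hmem y' hy')) vd
          rw [show SL.gff A u j = fun p => SL.acf A u j p * u p from rfl, hm,
            sval_ac j y' hy', hu0 y' hy']
          ring
        show fderiv ℝ (pd vd (SL.gff A u j)) (0, 0, y) (SL.dirx j) = 0
        have h1 := SL.sliceX (pd vd (SL.gff A u j)) (a := 0) (b := 0)
          (SL.diffAt hUo (SL.contDiffOn_pd hUo (hGs j) _) hyU) (Pi.single j 1)
        rw [show SL.dirx j = ((0:ℝ), (0:ℝ), Pi.single j (1:ℝ)) from rfl, ← h1]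
        have h2 : (fun y' => pd vd (SL.gff A u j) (0, 0, y'))
            =ᶠ[nhds y] (fun _ => (0 : ℂ)) :=
          Filter.eventuallyEq_of_mem (hΩ.mem_nhds hy) (fun y' hy' => hin y' hy')
        rw [h2.fderiv_eq]
        simp
      rw [Finset.sum_congr rfl (fun j _ => hz j)]
      simp
    have t2 : pd vd (fun p => ∑ j, SL.acf A u j p * ((-Complex.I) * pd (SL.dirx j) u p))
        (0, 0, y) = 0 := by
      rw [SL.pd_sum (fun j _ => (d_ac j).fun_mul
          ((differentiableAt_const (-Complex.I)).fun_mul (d_pdxu j))) vd]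
      refine Finset.sum_eq_zero (fun j _ => ?_)
      rw [SL.pd_mul (d_ac j) ((differentiableAt_const (-Complex.I)).fun_mul (d_pdxu j)) vd,
        sval_ac j y hy, sval_pdx_u j y hy]
      ring
    have t3 : pd vd (fun p => SL.sff A u p * u p) (0, 0, y) = 0 := by
      rw [SL.pd_mul d_S d_u vd, hu0 y hy, sval_S y hy]
      ring
    have t4 : pd vd (SL.qcf q u) (0, 0, y) = 0 := by
      have hq' := SL.pd_acomp q hqS d_u (hu0 y hy) ((hqhol y) 0) vd hvd
      show pd vd (fun p => q (p.2.2, u p)) (0, 0, y) = 0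
      rw [hq', hq1 y hy, mul_zero]
    rw [e0, t1, t2, t3, t4]
    ring
  -- ## commuting derivatives
  have swap3 : ∀ (vd : ℝ × ℝ × (Fin n → ℝ)) (f : (ℝ × ℝ × (Fin n → ℝ)) → ℂ),
      ContDiffOn ℝ ∞ f U → ∀ (j : Fin n), ∀ p ∈ U,
      pd (SL.dirx j) (pd (SL.dirx j) (pd vd f)) p
        = pd vd (pd (SL.dirx j) (pd (SL.dirx j) f)) p := by
    intro vd f hf j p hp
    have s1 : ∀ p' ∈ U, pd (SL.dirx j) (pd vd f) p' = pd vd (pd (SL.dirx j) f) p' :=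
      fun p' hp' => SL.pd_comm hUo hf hp' (SL.dirx j) vd
    rw [SL.pd_congr hUo s1 hp (SL.dirx j)]
    exact SL.pd_comm hUo (SL.contDiffOn_pd hUo hf _) hp (SL.dirx j) vd
  have dlapsum : ∀ i ∈ Finset.univ, DifferentiableAt ℝ
      (fun p => pd (SL.dirx i) (pd (SL.dirx i) u) p) ((0:ℝ), (0:ℝ), x) :=
    fun i _ => SL.diffAt hUo
      (SL.contDiffOn_pd hUo (SL.contDiffOn_pd hUo husm _) _) (hmem x hx)
  have goal1 : (∑ j, fderiv ℝ (fun y => fderiv ℝ v₁ y (Pi.single j (1:ℝ))) x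
      (Pi.single j (1:ℝ))) = 0 := by
    have h1 : ∀ j : Fin n, fderiv ℝ (fun y => fderiv ℝ v₁ y (Pi.single j (1:ℝ))) x
        (Pi.single j (1:ℝ))
        = pd (SL.dir1 n) (pd (SL.dirx j) (pd (SL.dirx j) u)) ((0:ℝ), (0:ℝ), x) := by
      intro j
      rw [lap_v (pd (SL.dir1 n) u) (SL.contDiffOn_pd hUo husm _) v₁ sval_v1 j]
      exact swap3 (SL.dir1 n) u husm j _ (hmem x hx)
    rw [Finset.sum_congr rfl (fun j _ => h1 j), ← SL.pd_sum dlapsum (SL.dir1 n),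
      SL.pd_congr hUo hLap (hmem x hx) (SL.dir1 n)]
    exact K1 (SL.dir1 n) rfl x hx
  have goal2 : (∑ j, fderiv ℝ (fun y => fderiv ℝ v₂ y (Pi.single j (1:ℝ))) x
      (Pi.single j (1:ℝ))) = 0 := by
    have h1 : ∀ j : Fin n, fderiv ℝ (fun y => fderiv ℝ v₂ y (Pi.single j (1:ℝ))) x
        (Pi.single j (1:ℝ))
        = pd (SL.dir2 n) (pd (SL.dirx j) (pd (SL.dirx j) u)) ((0:ℝ), (0:ℝ), x) := by
      intro j
      rw [lap_v (pd (SL.dir2 n) u) (SL.contDiffOn_pd hUo husm _) v₂ sval_v2 j]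
      exact swap3 (SL.dir2 n) u husm j _ (hmem x hx)
    rw [Finset.sum_congr rfl (fun j _ => h1 j), ← SL.pd_sum dlapsum (SL.dir2 n),
      SL.pd_congr hUo hLap (hmem x hx) (SL.dir2 n)]
    exact K1 (SL.dir2 n) rfl x hx
  refine ⟨goal1, goal2, ?_⟩
  -- ## second linearization
  have hxU := hmem x hx
  have d_u := SL.diffAt hUo husm hxU
  have rv1 : pd (SL.dir1 n) u ((0:ℝ), (0:ℝ), x) = v₁ x := (sval_v1 x hx).symm
  have rv2 : pd (SL.dir2 n) u ((0:ℝ), (0:ℝ), x) = v₂ x := (sval_v2 x hx).symm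
  have rb1 : ∀ j : Fin n, pd (SL.dirx j) (pd (SL.dir1 n) u) ((0:ℝ), (0:ℝ), x)
      = fderiv ℝ v₁ x (Pi.single j 1) :=
    fun j => (fd_v (pd (SL.dir1 n) u) (SL.contDiffOn_pd hUo husm _) v₁ sval_v1 x hx j).symm
  have rb2 : ∀ j : Fin n, pd (SL.dirx j) (pd (SL.dir2 n) u) ((0:ℝ), (0:ℝ), x)
      = fderiv ℝ v₂ x (Pi.single j 1) :=
    fun j => (fd_v (pd (SL.dir2 n) u) (SL.contDiffOn_pd hUo husm _) v₂ sval_v2 x hx j).symm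
  -- differentiability of v₁, v₂ and of the z-derivative coefficient at points of Ω
  have hv1d : ∀ y ∈ Ω, DifferentiableAt ℝ v₁ y := by
    intro y hy
    have h2 : v₁ =ᶠ[nhds y] (fun y' => pd (SL.dir1 n) u (0, 0, y')) :=
      Filter.eventuallyEq_of_mem (hΩ.mem_nhds hy) sval_v1
    rw [h2.differentiableAt_iff]
    exact SL.diff_slice (SL.diffAt hUo (SL.contDiffOn_pd hUo husm _) (hmem y hy))
  have hv2d : ∀ y ∈ Ω, DifferentiableAt ℝ v₂ y := by
    intro y hy
    have h2 : v₂ =ᶠ[nhds y] (fun y' => pd (SL.dir2 n) u (0, 0, y')) :=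
      Filter.eventuallyEq_of_mem (hΩ.mem_nhds hy) sval_v2
    rw [h2.differentiableAt_iff]
    exact SL.diff_slice (SL.diffAt hUo (SL.contDiffOn_pd hUo husm _) (hmem y hy))
  have hαeq : ∀ j : Fin n, (fun y => deriv (fun z : ℂ => A (y, z) j) 0)
      = (fun y => fderiv ℝ (fun pr : (Fin n → ℝ) × ℂ => A pr j) (y, 0)
          ((0 : Fin n → ℝ), 1)) := by
    intro j
    funext y
    rw [SL.zslice (fun pr => A pr j)
      (((hAj j).differentiable (by decide)).differentiableAt) ((hAjhol j y) 0) 1, one_mul]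
  have hαd : ∀ j : Fin n, DifferentiableAt ℝ
      (fun y => deriv (fun z : ℂ => A (y, z) j) 0) x := by
    intro j
    rw [hαeq j]
    have hc : ContDiff ℝ ∞ (fun y : Fin n → ℝ =>
        fderiv ℝ (fun pr : (Fin n → ℝ) × ℂ => A pr j) (y, 0)) :=
      ((hAj j).fderiv_right (m := ∞) (by decide)).comp (contDiff_id.prodMk contDiff_const)
    exact ((hc.clm_apply contDiff_const).differentiable (by decide)).differentiableAt
  -- product-rule helper on Ω
  have fdprod : ∀ (f g h : (Fin n → ℝ) → ℂ), DifferentiableAt ℝ f x →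
      DifferentiableAt ℝ g x → DifferentiableAt ℝ h x → ∀ c : Fin n → ℝ,
      fderiv ℝ (fun y => 2 * (f y * (g y * h y))) x c
        = 2 * (fderiv ℝ f x c * (g x * h x))
          + 2 * (f x * (fderiv ℝ g x c * h x + g x * fderiv ℝ h x c)) := by
    intro f g h hf hg hh c
    rw [fderiv_const_mul (hf.fun_mul (hg.fun_mul hh)) (2 : ℂ), ContinuousLinearMap.smul_apply,
      fderiv_fun_mul hf (hg.fun_mul hh), ContinuousLinearMap.add_apply,
      ContinuousLinearMap.smul_apply, ContinuousLinearMap.smul_apply,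
      fderiv_fun_mul hg hh, ContinuousLinearMap.add_apply, ContinuousLinearMap.smul_apply,
      ContinuousLinearMap.smul_apply]
    simp only [smul_eq_mul]
    ring
  -- the function-level ε₂-derivative of the right-hand side on U
  have hd2X : ∀ p ∈ U, pd (SL.dir2 n) (SL.xff A q u) p
      = (-Complex.I) * (∑ j, pd (SL.dirx j) (pd (SL.dir2 n) (SL.gff A u j)) p)
        + ((∑ j, (SL.acf A u j p * ((-Complex.I) * pd (SL.dir2 n) (pd (SL.dirx j) u) p)
            + ((-Complex.I) * pd (SL.dirx j) u p) * pd (SL.dir2 n) (SL.acf A u j) p))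
          + ((SL.sff A u p * pd (SL.dir2 n) u p + u p * pd (SL.dir2 n) (SL.sff A u) p)
            + fderiv ℝ q (p.2.2, u p) ((0 : Fin n → ℝ), pd (SL.dir2 n) u p))) := by
    intro p hp
    have d_u' := SL.diffAt hUo husm hp
    have d_pdxu' : ∀ j : Fin n, DifferentiableAt ℝ (pd (SL.dirx j) u) p :=
      fun j => SL.diffAt hUo (SL.contDiffOn_pd hUo husm _) hp
    have d_ac' : ∀ j, DifferentiableAt ℝ (SL.acf A u j) p :=
      fun j => SL.diffAt hUo (hacs j) hp
    have d_pdG' : ∀ j, DifferentiableAt ℝ (pd (SL.dirx j) (SL.gff A u j)) p :=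
      fun j => SL.diffAt hUo (SL.contDiffOn_pd hUo (hGs j) _) hp
    have d_S' := SL.diffAt hUo hSs hp
    have d_qc' := SL.diffAt hUo hqcs hp
    have e0 : pd (SL.dir2 n) (SL.xff A q u) p
        = pd (SL.dir2 n)
            (fun p' => (-Complex.I) * (∑ j, pd (SL.dirx j) (SL.gff A u j) p')) p
          + (pd (SL.dir2 n)
              (fun p' => ∑ j, SL.acf A u j p' * ((-Complex.I) * pd (SL.dirx j) u p')) p
            + (pd (SL.dir2 n) (fun p' => SL.sff A u p' * u p') p
              + pd (SL.dir2 n) (SL.qcf q u) p)) := by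
      rw [show SL.xff A q u = fun p' =>
        ((-Complex.I) * (∑ j, pd (SL.dirx j) (SL.gff A u j) p'))
          + ((∑ j, SL.acf A u j p' * ((-Complex.I) * pd (SL.dirx j) u p'))
            + (SL.sff A u p' * u p' + SL.qcf q u p')) from rfl]
      rw [SL.pd_add ((differentiableAt_const (-Complex.I)).fun_mul
          (DifferentiableAt.fun_sum (fun j _ => d_pdG' j)))
        ((DifferentiableAt.fun_sum (fun j _ => (d_ac' j).fun_mul
            ((differentiableAt_const (-Complex.I)).fun_mul (d_pdxu' j)))).fun_add
          ((d_S'.fun_mul d_u').fun_add d_qc')) (SL.dir2 n)]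
      rw [SL.pd_add (DifferentiableAt.fun_sum (fun j _ => (d_ac' j).fun_mul
          ((differentiableAt_const (-Complex.I)).fun_mul (d_pdxu' j))))
        ((d_S'.fun_mul d_u').fun_add d_qc') (SL.dir2 n)]
      rw [SL.pd_add (d_S'.fun_mul d_u') d_qc' (SL.dir2 n)]
    have e1 : pd (SL.dir2 n)
        (fun p' => (-Complex.I) * (∑ j, pd (SL.dirx j) (SL.gff A u j) p')) p
        = (-Complex.I) * (∑ j, pd (SL.dirx j) (pd (SL.dir2 n) (SL.gff A u j)) p) := by
      rw [SL.pd_const_mul (DifferentiableAt.fun_sum (fun j _ => d_pdG' j)) (-Complex.I)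
          (SL.dir2 n),
        SL.pd_sum (fun j _ => d_pdG' j) (SL.dir2 n)]
      congr 1
      exact Finset.sum_congr rfl
        (fun j _ => SL.pd_comm hUo (hGs j) hp (SL.dir2 n) (SL.dirx j))
    have e2 : pd (SL.dir2 n)
        (fun p' => ∑ j, SL.acf A u j p' * ((-Complex.I) * pd (SL.dirx j) u p')) p
        = ∑ j, (SL.acf A u j p * ((-Complex.I) * pd (SL.dir2 n) (pd (SL.dirx j) u) p)
            + ((-Complex.I) * pd (SL.dirx j) u p) * pd (SL.dir2 n) (SL.acf A u j) p) := by
      rw [SL.pd_sum (fun j _ => (d_ac' j).fun_mul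
          ((differentiableAt_const (-Complex.I)).fun_mul (d_pdxu' j))) (SL.dir2 n)]
      refine Finset.sum_congr rfl (fun j _ => ?_)
      rw [SL.pd_mul (d_ac' j) ((differentiableAt_const (-Complex.I)).fun_mul (d_pdxu' j))
          (SL.dir2 n),
        SL.pd_const_mul (d_pdxu' j) (-Complex.I) (SL.dir2 n)]
    have e3 : pd (SL.dir2 n) (fun p' => SL.sff A u p' * u p') p
        = SL.sff A u p * pd (SL.dir2 n) u p + u p * pd (SL.dir2 n) (SL.sff A u) p :=
      SL.pd_mul d_S' d_u' (SL.dir2 n)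
    have e4 : pd (SL.dir2 n) (SL.qcf q u) p
        = fderiv ℝ q (p.2.2, u p) ((0 : Fin n → ℝ), pd (SL.dir2 n) u p) := by
      have hc := SL.compChain q (p := p)
        ((hqS.differentiable (by decide)).differentiableAt) d_u' (SL.dir2 n)
      show fderiv ℝ (fun p' => q (p'.2.2, u p')) p (SL.dir2 n) = _
      rw [hc]
      rfl
    rw [e0, e1, e2, e3, e4]
  -- slice values of derivatives of `sff`
  have spdS : ∀ (vd : ℝ × ℝ × (Fin n → ℝ)), ∀ y ∈ Ω,
      pd vd (SL.sff A u) (0, 0, y) = 0 := by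
    intro vd y hy
    rw [show SL.sff A u = fun p => ∑ j, SL.acf A u j p * SL.acf A u j p from rfl,
      SL.pd_sum (fun j _ => (SL.diffAt hUo (hacs j) (hmem y hy)).fun_mul
        (SL.diffAt hUo (hacs j) (hmem y hy))) vd]
    refine Finset.sum_eq_zero (fun j _ => ?_)
    rw [SL.pd_mul (SL.diffAt hUo (hacs j) (hmem y hy))
      (SL.diffAt hUo (hacs j) (hmem y hy)) vd, sval_ac j y hy]
    ring
  -- smoothness of the four pieces of the differentiated RHS
  have hP1s : ContDiffOn ℝ ∞
      (fun p => (-Complex.I) * (∑ j, pd (SL.dirx j) (pd (SL.dir2 n) (SL.gff A u j)) p))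
      U := contDiffOn_const.mul (ContDiffOn.sum (fun j _ =>
        SL.contDiffOn_pd hUo (SL.contDiffOn_pd hUo (hGs j) _) _))
  have hP2s : ContDiffOn ℝ ∞
      (fun p => ∑ j, (SL.acf A u j p
          * ((-Complex.I) * pd (SL.dir2 n) (pd (SL.dirx j) u) p)
        + ((-Complex.I) * pd (SL.dirx j) u p) * pd (SL.dir2 n) (SL.acf A u j) p)) U :=
    ContDiffOn.sum (fun j _ =>
      ((hacs j).mul (contDiffOn_const.mul
        (SL.contDiffOn_pd hUo (SL.contDiffOn_pd hUo husm _) _))).add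
      ((contDiffOn_const.mul (SL.contDiffOn_pd hUo husm _)).mul
        (SL.contDiffOn_pd hUo (hacs j) _)))
  have hP3s : ContDiffOn ℝ ∞
      (fun p => SL.sff A u p * pd (SL.dir2 n) u p + u p * pd (SL.dir2 n) (SL.sff A u) p)
      U := (hSs.mul (SL.contDiffOn_pd hUo husm _)).add
        (husm.mul (SL.contDiffOn_pd hUo hSs _))
  have hP4s : ContDiffOn ℝ ∞
      (fun p => fderiv ℝ q (p.2.2, u p) ((0 : Fin n → ℝ), pd (SL.dir2 n) u p)) U :=
    (((hqS.fderiv_right (m := ∞) (by decide)).comp_contDiffOn hmsm).clm_apply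
      (contDiffOn_const.prodMk (SL.contDiffOn_pd hUo husm _)))
  -- split of `pd d1 (pd d2 xff)` at the base point
  have split2 : pd (SL.dir1 n) (pd (SL.dir2 n) (SL.xff A q u)) ((0:ℝ), (0:ℝ), x)
      = pd (SL.dir1 n)
          (fun p => (-Complex.I)
            * (∑ j, pd (SL.dirx j) (pd (SL.dir2 n) (SL.gff A u j)) p)) ((0:ℝ), (0:ℝ), x)
        + (pd (SL.dir1 n)
            (fun p => ∑ j, (SL.acf A u j p
                * ((-Complex.I) * pd (SL.dir2 n) (pd (SL.dirx j) u) p)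
              + ((-Complex.I) * pd (SL.dirx j) u p) * pd (SL.dir2 n) (SL.acf A u j) p))
            ((0:ℝ), (0:ℝ), x)
          + (pd (SL.dir1 n)
              (fun p => SL.sff A u p * pd (SL.dir2 n) u p
                + u p * pd (SL.dir2 n) (SL.sff A u) p) ((0:ℝ), (0:ℝ), x)
            + pd (SL.dir1 n)
              (fun p => fderiv ℝ q (p.2.2, u p) ((0 : Fin n → ℝ), pd (SL.dir2 n) u p))
              ((0:ℝ), (0:ℝ), x))) := by
    rw [SL.pd_congr hUo hd2X hxU (SL.dir1 n)]
    rw [SL.pd_add (SL.diffAt hUo hP1s hxU)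
      ((SL.diffAt hUo hP2s hxU).fun_add ((SL.diffAt hUo hP3s hxU).fun_add (SL.diffAt hUo hP4s hxU)))
      (SL.dir1 n)]
    rw [SL.pd_add (SL.diffAt hUo hP2s hxU)
      ((SL.diffAt hUo hP3s hxU).fun_add (SL.diffAt hUo hP4s hxU)) (SL.dir1 n)]
    rw [SL.pd_add (SL.diffAt hUo hP3s hxU) (SL.diffAt hUo hP4s hxU) (SL.dir1 n)]
  -- evaluation of the four pieces
  have c2v : ∀ (j : Fin n), ∀ y ∈ Ω, pd (SL.dir1 n) (pd (SL.dir2 n) (SL.gff A u j)) (0, 0, y)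
      = 2 * (deriv (fun z : ℂ => A (y, z) j) 0 * (v₁ y * v₂ y)) := by
    intro j y hy
    have hyU := hmem y hy
    have hGd2 : ∀ p' ∈ U, pd (SL.dir2 n) (SL.gff A u j) p'
        = SL.acf A u j p' * pd (SL.dir2 n) u p' + u p' * pd (SL.dir2 n) (SL.acf A u j) p' := by
      intro p' hp'
      rw [show SL.gff A u j = fun p => SL.acf A u j p * u p from rfl,
        SL.pd_mul (SL.diffAt hUo (hacs j) hp') (SL.diffAt hUo husm hp') (SL.dir2 n)]
    rw [SL.pd_congr hUo hGd2 hyU (SL.dir1 n)]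
    rw [SL.pd_add ((SL.diffAt hUo (hacs j) hyU).fun_mul
        (SL.diffAt hUo (SL.contDiffOn_pd hUo husm _) hyU))
      ((SL.diffAt hUo husm hyU).fun_mul
        (SL.diffAt hUo (SL.contDiffOn_pd hUo (hacs j) _) hyU)) (SL.dir1 n)]
    rw [SL.pd_mul (SL.diffAt hUo (hacs j) hyU)
      (SL.diffAt hUo (SL.contDiffOn_pd hUo husm _) hyU) (SL.dir1 n)]
    rw [SL.pd_mul (SL.diffAt hUo husm hyU)
      (SL.diffAt hUo (SL.contDiffOn_pd hUo (hacs j) _) hyU) (SL.dir1 n)]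
    rw [sval_ac j y hy, hu0 y hy, sval_pdac j (SL.dir1 n) rfl y hy,
      sval_pdac j (SL.dir2 n) rfl y hy, ← sval_v1 y hy, ← sval_v2 y hy]
    ring
  have E1 : pd (SL.dir1 n)
      (fun p => (-Complex.I) * (∑ j, pd (SL.dirx j) (pd (SL.dir2 n) (SL.gff A u j)) p))
      ((0:ℝ), (0:ℝ), x)
      = (-Complex.I) * ∑ j,
          (2 * (fderiv ℝ (fun y => deriv (fun z : ℂ => A (y, z) j) 0) x (Pi.single j 1)
              * (v₁ x * v₂ x))
            + 2 * (deriv (fun z : ℂ => A (x, z) j) 0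
              * (fderiv ℝ v₁ x (Pi.single j 1) * v₂ x
                + v₁ x * fderiv ℝ v₂ x (Pi.single j 1)))) := by
    rw [SL.pd_const_mul (DifferentiableAt.fun_sum (fun j _ => SL.diffAt hUo
        (SL.contDiffOn_pd hUo (SL.contDiffOn_pd hUo (hGs j) _) _) hxU)) (-Complex.I)
        (SL.dir1 n),
      SL.pd_sum (fun j _ => SL.diffAt hUo
        (SL.contDiffOn_pd hUo (SL.contDiffOn_pd hUo (hGs j) _) _) hxU) (SL.dir1 n)]
    congr 1
    refine Finset.sum_congr rfl (fun j _ => ?_)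
    rw [SL.pd_comm hUo (SL.contDiffOn_pd hUo (hGs j) _) hxU (SL.dir1 n) (SL.dirx j)]
    show fderiv ℝ (pd (SL.dir1 n) (pd (SL.dir2 n) (SL.gff A u j))) ((0:ℝ), (0:ℝ), x)
      (SL.dirx j) = _
    have h1 := SL.sliceX (pd (SL.dir1 n) (pd (SL.dir2 n) (SL.gff A u j))) (a := 0) (b := 0)
      (SL.diffAt hUo (SL.contDiffOn_pd hUo (SL.contDiffOn_pd hUo (hGs j) _) _) hxU)
      (Pi.single j 1)
    rw [show SL.dirx j = ((0:ℝ), (0:ℝ), Pi.single j (1:ℝ)) from rfl, ← h1]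
    have h2 : (fun y => pd (SL.dir1 n) (pd (SL.dir2 n) (SL.gff A u j)) (0, 0, y))
        =ᶠ[nhds x] (fun y => 2 * (deriv (fun z : ℂ => A (y, z) j) 0 * (v₁ y * v₂ y))) :=
      Filter.eventuallyEq_of_mem (hΩ.mem_nhds hx) (fun y hy => c2v j y hy)
    rw [h2.fderiv_eq]
    exact fdprod (fun y => deriv (fun z : ℂ => A (y, z) j) 0) v₁ v₂
      (hαd j) (hv1d x hx) (hv2d x hx) (Pi.single j 1)
  have E2 : pd (SL.dir1 n)
      (fun p => ∑ j, (SL.acf A u j p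
          * ((-Complex.I) * pd (SL.dir2 n) (pd (SL.dirx j) u) p)
        + ((-Complex.I) * pd (SL.dirx j) u p) * pd (SL.dir2 n) (SL.acf A u j) p))
      ((0:ℝ), (0:ℝ), x)
      = ∑ j, (((-Complex.I) * fderiv ℝ v₂ x (Pi.single j 1))
            * (v₁ x * deriv (fun z : ℂ => A (x, z) j) 0)
          + (v₂ x * deriv (fun z : ℂ => A (x, z) j) 0)
            * ((-Complex.I) * fderiv ℝ v₁ x (Pi.single j 1))) := by
    rw [SL.pd_sum (fun j _ =>
      ((SL.diffAt hUo (hacs j) hxU).fun_mul ((differentiableAt_const (-Complex.I)).fun_mul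
        (SL.diffAt hUo (SL.contDiffOn_pd hUo (SL.contDiffOn_pd hUo husm _) _) hxU))).fun_add
      (((differentiableAt_const (-Complex.I)).fun_mul
          (SL.diffAt hUo (SL.contDiffOn_pd hUo husm _) hxU)).fun_mul
        (SL.diffAt hUo (SL.contDiffOn_pd hUo (hacs j) _) hxU))) (SL.dir1 n)]
    refine Finset.sum_congr rfl (fun j _ => ?_)
    rw [SL.pd_add ((SL.diffAt hUo (hacs j) hxU).fun_mul
        ((differentiableAt_const (-Complex.I)).fun_mul
          (SL.diffAt hUo (SL.contDiffOn_pd hUo (SL.contDiffOn_pd hUo husm _) _) hxU)))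
      (((differentiableAt_const (-Complex.I)).fun_mul
          (SL.diffAt hUo (SL.contDiffOn_pd hUo husm _) hxU)).fun_mul
        (SL.diffAt hUo (SL.contDiffOn_pd hUo (hacs j) _) hxU)) (SL.dir1 n)]
    rw [SL.pd_mul (SL.diffAt hUo (hacs j) hxU)
      ((differentiableAt_const (-Complex.I)).fun_mul
        (SL.diffAt hUo (SL.contDiffOn_pd hUo (SL.contDiffOn_pd hUo husm _) _) hxU))
      (SL.dir1 n)]
    rw [SL.pd_mul ((differentiableAt_const (-Complex.I)).fun_mul
        (SL.diffAt hUo (SL.contDiffOn_pd hUo husm _) hxU))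
      (SL.diffAt hUo (SL.contDiffOn_pd hUo (hacs j) _) hxU) (SL.dir1 n)]
    rw [SL.pd_const_mul (SL.diffAt hUo (SL.contDiffOn_pd hUo husm _) hxU)
      (-Complex.I) (SL.dir1 n)]
    rw [sval_ac j x hx, sval_pdx_u j x hx,
      SL.pd_comm hUo husm hxU (SL.dir2 n) (SL.dirx j), rb2 j,
      SL.pd_comm hUo husm hxU (SL.dir1 n) (SL.dirx j), rb1 j,
      sval_pdac j (SL.dir1 n) rfl x hx, sval_pdac j (SL.dir2 n) rfl x hx,
      ← sval_v1 x hx, ← sval_v2 x hx]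
    ring
  have E3 : pd (SL.dir1 n)
      (fun p => SL.sff A u p * pd (SL.dir2 n) u p + u p * pd (SL.dir2 n) (SL.sff A u) p)
      ((0:ℝ), (0:ℝ), x) = 0 := by
    rw [SL.pd_add ((SL.diffAt hUo hSs hxU).fun_mul
        (SL.diffAt hUo (SL.contDiffOn_pd hUo husm _) hxU))
      ((SL.diffAt hUo husm hxU).fun_mul
        (SL.diffAt hUo (SL.contDiffOn_pd hUo hSs _) hxU)) (SL.dir1 n)]
    rw [SL.pd_mul (SL.diffAt hUo hSs hxU)
      (SL.diffAt hUo (SL.contDiffOn_pd hUo husm _) hxU) (SL.dir1 n)]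
    rw [SL.pd_mul (SL.diffAt hUo husm hxU)
      (SL.diffAt hUo (SL.contDiffOn_pd hUo hSs _) hxU) (SL.dir1 n)]
    rw [sval_S x hx, hu0 x hx, spdS (SL.dir1 n) x hx, spdS (SL.dir2 n) x hx]
    ring
  have E4 : pd (SL.dir1 n)
      (fun p => fderiv ℝ q (p.2.2, u p) ((0 : Fin n → ℝ), pd (SL.dir2 n) u p))
      ((0:ℝ), (0:ℝ), x)
      = v₂ x * v₁ x * deriv (fun z : ℂ => deriv (fun z' : ℂ => q (x, z')) z) 0 := by
    have hqt := SL.pd_qterm hqS d_u (hu0 x hx)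
      (ψ := pd (SL.dir2 n) u) (SL.diffAt hUo (SL.contDiffOn_pd hUo husm _) hxU)
      (hqhol x) (hq1 x hx) (SL.dir1 n) rfl
    rw [hqt, rv1, rv2]
  -- reduction of the `w`-Laplacian to `pd d1 (pd d2 xff)`
  have hsum1 : (∑ j, fderiv ℝ (fun y => fderiv ℝ w y (Pi.single j (1:ℝ))) x
      (Pi.single j (1:ℝ)))
      = pd (SL.dir1 n) (pd (SL.dir2 n) (SL.xff A q u)) ((0:ℝ), (0:ℝ), x) := by
    have h1 : ∀ j : Fin n, fderiv ℝ (fun y => fderiv ℝ w y (Pi.single j (1:ℝ))) x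
        (Pi.single j (1:ℝ))
        = pd (SL.dir1 n) (pd (SL.dir2 n) (pd (SL.dirx j) (pd (SL.dirx j) u)))
            ((0:ℝ), (0:ℝ), x) := by
      intro j
      rw [lap_v (pd (SL.dir1 n) (pd (SL.dir2 n) u))
        (SL.contDiffOn_pd hUo (SL.contDiffOn_pd hUo husm _) _) w sval_w j]
      rw [swap3 (SL.dir1 n) (pd (SL.dir2 n) u) (SL.contDiffOn_pd hUo husm _) j _ hxU]
      have s4 : ∀ p ∈ U, pd (SL.dirx j) (pd (SL.dirx j) (pd (SL.dir2 n) u)) p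
          = pd (SL.dir2 n) (pd (SL.dirx j) (pd (SL.dirx j) u)) p :=
        fun p hp => swap3 (SL.dir2 n) u husm j p hp
      exact SL.pd_congr hUo s4 hxU (SL.dir1 n)
    rw [Finset.sum_congr rfl (fun j _ => h1 j)]
    rw [← SL.pd_sum (fun j _ => SL.diffAt hUo (SL.contDiffOn_pd hUo
      (SL.contDiffOn_pd hUo (SL.contDiffOn_pd hUo husm _) _) _) hxU) (SL.dir1 n)]
    have hinner : ∀ p ∈ U, (∑ j, pd (SL.dir2 n) (pd (SL.dirx j) (pd (SL.dirx j) u)) p)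
        = pd (SL.dir2 n) (fun p' => ∑ j, pd (SL.dirx j) (pd (SL.dirx j) u) p') p :=
      fun p hp => (SL.pd_sum (fun j _ => SL.diffAt hUo
        (SL.contDiffOn_pd hUo (SL.contDiffOn_pd hUo husm _) _) hp) (SL.dir2 n)).symm
    rw [SL.pd_congr hUo hinner hxU (SL.dir1 n)]
    have hlap2 : ∀ p ∈ U, pd (SL.dir2 n)
        (fun p' => ∑ j, pd (SL.dirx j) (pd (SL.dirx j) u) p') p
        = pd (SL.dir2 n) (SL.xff A q u) p :=
      fun p hp => SL.pd_congr hUo hLap hp (SL.dir2 n)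
    rw [SL.pd_congr hUo hlap2 hxU (SL.dir1 n)]
  -- ## final assembly
  rw [hsum1, split2, E1, E2, E3, E4]
  have hkey : (3 : ℂ) * (∑ j, deriv (fun z : ℂ => A (x, z) j) 0 *
        (v₁ x * ((-Complex.I) * fderiv ℝ v₂ x (Pi.single j (1:ℝ)))
          + v₂ x * ((-Complex.I) * fderiv ℝ v₁ x (Pi.single j (1:ℝ)))))
      + 2 * ((-Complex.I) * (∑ j, fderiv ℝ
          (fun y => deriv (fun z : ℂ => A (y, z) j) 0) x
          (Pi.single j (1:ℝ)))) * (v₁ x * v₂ x)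
      = (-Complex.I) * (∑ j,
          (2 * (fderiv ℝ (fun y => deriv (fun z : ℂ => A (y, z) j) 0) x (Pi.single j 1)
              * (v₁ x * v₂ x))
            + 2 * (deriv (fun z : ℂ => A (x, z) j) 0
              * (fderiv ℝ v₁ x (Pi.single j 1) * v₂ x
                + v₁ x * fderiv ℝ v₂ x (Pi.single j 1)))))
        + ∑ j, (((-Complex.I) * fderiv ℝ v₂ x (Pi.single j 1))
            * (v₁ x * deriv (fun z : ℂ => A (x, z) j) 0)
          + (v₂ x * deriv (fun z : ℂ => A (x, z) j) 0)
            * ((-Complex.I) * fderiv ℝ v₁ x (Pi.single j 1))) := by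
    simp only [Finset.mul_sum, Finset.sum_mul, ← Finset.sum_add_distrib]
    exact Finset.sum_congr rfl (fun j _ => by ring)
  linear_combination hkey
end

section
/- Let n ≥ 2, m ≥ 2 an integer, and let Ω ⊆ ℝⁿ be open. Let à : ℝⁿ → ℂⁿ be C¹ and let q̃ : Ω → ℂ be measurable and essentially bounded. Suppose that for every ζ ∈ ℂⁿ with ζ·ζ = 0, writing v_ζ(x) := exp(ζ·x), one has −(D·Ã)(x) v_ζ(x) − (m+1) Ã(x)·(Dv_ζ)(x) + q̃(x) v_ζ(x) = 0 for Lebesgue-almost every x ∈ Ω. Then Ã(x) = 0 for every x ∈ Ω and q̃(x) = 0 for Lebesgue-almost every x ∈ Ω. -/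
/-!
Testing the identity with `ζ = 0` gives `i (∇·Ã) + q̃ = 0` a.e.; subtracting this from the
identity at a null vector `ζ` and cancelling the nonvanishing factor `exp (ζ·x)` leaves
`Ã(x)·ζ = 0` a.e. The countably many null vectors `eᵢ + i eⱼ` (`i ≠ j`) already force a vector
of `ℂⁿ`, `n ≥ 2`, to vanish, so `Ã = 0` a.e. on `Ω`, hence everywhere on `Ω` by continuity.
Then `∇·Ã = 0` on the open set `Ω`, and `q̃ = 0` a.e. follows from the first identity.
-/

open MeasureTheory Complex Matrix

section IsotropicPair

variable {ι : Type*} [Fintype ι] [DecidableEq ι]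

def isotropicPair (i j : ι) : ι → ℂ := Pi.single i 1 + Pi.single j I

theorem isotropicPair_dotProduct_self {i j : ι} (hij : i ≠ j) :
    isotropicPair i j ⬝ᵥ isotropicPair i j = 0 := by
  simp [isotropicPair, dotProduct_add, hij, hij.symm]

theorem dotProduct_isotropicPair (a : ι → ℂ) (i j : ι) :
    a ⬝ᵥ isotropicPair i j = a i + I * a j := by
  simp [isotropicPair, dotProduct_add, mul_comm]

theorem eq_zero_of_forall_dotProduct_isotropicPair [Nontrivial ι] {a : ι → ℂ}
    (h : ∀ i j, i ≠ j → a ⬝ᵥ isotropicPair i j = 0) : a = 0 := by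
  funext i
  obtain ⟨j, hji⟩ := exists_ne i
  have hij := h i j hji.symm
  have hji := h j i hji
  rw [dotProduct_isotropicPair] at hij hji
  -- `aᵢ + i aⱼ = 0` and `aⱼ + i aᵢ = 0` give `2 aᵢ = 0`
  have h2 : (2 : ℂ) * a i = 0 := by linear_combination hij - I * hji + a i * I_sq
  simpa using h2

theorem ae_eq_zero_of_forall_isotropic_ae_dotProduct_eq_zero [Nontrivial ι] {α : Type*}
    [MeasurableSpace α] {μ : Measure α} {f : α → ι → ℂ}
    (h : ∀ ζ : ι → ℂ, ζ ⬝ᵥ ζ = 0 → ∀ᵐ x ∂μ, f x ⬝ᵥ ζ = 0) : ∀ᵐ x ∂μ, f x = 0 := by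
  have hpairs : ∀ᵐ x ∂μ, ∀ i j : ι, i ≠ j → f x ⬝ᵥ isotropicPair i j = 0 := by
    simp only [ae_all_iff, Filter.eventually_imp_distrib_left]
    exact fun i j hij => h _ (isotropicPair_dotProduct_self hij)
  filter_upwards [hpairs] with x hx
  exact eq_zero_of_forall_dotProduct_isotropicPair hx

end IsotropicPair

theorem transport_expr_eq_exp_mul {n : ℕ} (m : ℕ) (d q : ℂ) (a ζ : Fin n → ℂ) (x : Fin n → ℝ) :
    -((-I) * d) * exp (∑ j, ζ j * (x j : ℂ))
        - ((m : ℂ) + 1) * (∑ j, a j * ((-I) * ζ j * exp (∑ i, ζ i * (x i : ℂ))))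
        + q * exp (∑ j, ζ j * (x j : ℂ))
      = exp (∑ j, ζ j * (x j : ℂ)) * (I * d + q + ((m : ℂ) + 1) * I * (a ⬝ᵥ ζ)) := by
  have hsum : ∑ j, a j * ((-I) * ζ j * exp (∑ i, ζ i * (x i : ℂ)))
      = (-I) * exp (∑ i, ζ i * (x i : ℂ)) * (a ⬝ᵥ ζ) := by
    rw [dotProduct, Finset.mul_sum]
    exact Finset.sum_congr rfl fun j _ => by ring
  rw [hsum]
  ring

theorem fderiv_eq_zero_of_eqOn_zero {E F : Type*} [NormedAddCommGroup E] [NormedSpace ℝ E]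
    [NormedAddCommGroup F] [NormedSpace ℝ F] {f : E → F} {U : Set E} (hU : IsOpen U)
    (hf : Set.EqOn f 0 U) {x : E} (hx : x ∈ U) : fderiv ℝ f x = 0 := by
  rw [(Filter.eventuallyEq_of_mem (hU.mem_nhds hx) hf).fderiv_eq]
  exact fderiv_const_apply 0

theorem transport_identity_forces_vanishing_general (n m : ℕ) (hn : 2 ≤ n)
    (Ω : Set (Fin n → ℝ)) (hΩ : IsOpen Ω)
    (Atil : (Fin n → ℝ) → (Fin n → ℂ)) (hAtil : ContDiff ℝ 1 Atil)
    (qtil : (Fin n → ℝ) → ℂ)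
    (hid : ∀ ζ : Fin n → ℂ, (∑ j, ζ j * ζ j) = 0 →
      ∀ᵐ x ∂(volume.restrict Ω),
        -((-Complex.I) * (∑ j, fderiv ℝ (fun y => Atil y j) x
              (Pi.single j (1 : ℝ))))
            * Complex.exp (∑ j, ζ j * (x j : ℂ))
          - ((m : ℂ) + 1) * (∑ j, Atil x j *
              ((-Complex.I) * ζ j * Complex.exp (∑ i, ζ i * (x i : ℂ))))
          + qtil x * Complex.exp (∑ j, ζ j * (x j : ℂ)) = 0) :
    (∀ x ∈ Ω, Atil x = 0) ∧ (∀ᵐ x ∂(volume.restrict Ω), qtil x = 0) := by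
  simp only [transport_expr_eq_exp_mul] at hid
  have hdivq : ∀ᵐ x ∂(volume.restrict Ω),
      I * ∑ j, fderiv ℝ (fun y => Atil y j) x (Pi.single j 1) + qtil x = 0 := by
    simpa using hid 0 (by simp)
  have hAζ (ζ : Fin n → ℂ) (hζ : ζ ⬝ᵥ ζ = 0) :
      ∀ᵐ x ∂(volume.restrict Ω), Atil x ⬝ᵥ ζ = 0 := by
    filter_upwards [hid ζ hζ, hdivq] with x hx h0
    rw [h0, zero_add] at hx
    simpa [exp_ne_zero, I_ne_zero, Nat.cast_add_one_ne_zero] using hx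
  have : Nontrivial (Fin n) := Fin.nontrivial_iff_two_le.2 hn
  have hAΩ : Set.EqOn Atil 0 Ω :=
    Measure.eqOn_open_of_ae_eq (ae_eq_zero_of_forall_isotropic_ae_dotProduct_eq_zero hAζ) hΩ
      hAtil.continuous.continuousOn continuousOn_const
  refine ⟨hAΩ, ?_⟩
  filter_upwards [hdivq, ae_restrict_mem hΩ.measurableSet] with x hx hxΩ
  have hdiv : ∑ j, fderiv ℝ (fun y => Atil y j) x (Pi.single j 1) = 0 :=
    Finset.sum_eq_zero fun j _ => by
      rw [fderiv_eq_zero_of_eqOn_zero hΩ (fun y hy => congrFun (hAΩ hy) j) hxΩ]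
      rfl
  simpa [hdiv] using hx

/-- Let `n ≥ 2`, `m ≥ 2`, `Ω ⊆ ℝⁿ` open.  Let `Ã : ℝⁿ → ℂⁿ` be
`C¹` and `q̃ : Ω → ℂ` measurable and essentially bounded.  Suppose that for
every null vector `ζ ∈ ℂⁿ` (`ζ·ζ = 0`), with `v_ζ(x) = exp(ζ·x)` (so that
`Dv_ζ = −iζ v_ζ` where `D = −i∇`), one has
`−(D·Ã)(x) v_ζ(x) − (m+1) Ã(x)·(Dv_ζ)(x) + q̃(x) v_ζ(x) = 0` for a.e. `x ∈ Ω`.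
Then `Ã = 0` everywhere on `Ω` and `q̃ = 0` a.e. in `Ω`. -/
theorem transport_identity_forces_vanishing (n m : ℕ) (hn : 2 ≤ n) (hm : 2 ≤ m)
    (Ω : Set (Fin n → ℝ)) (hΩ : IsOpen Ω)
    (Atil : (Fin n → ℝ) → (Fin n → ℂ)) (hAtil : ContDiff ℝ 1 Atil)
    (qtil : (Fin n → ℝ) → ℂ) (hqmeas : Measurable qtil)
    (hqbdd : MemLp qtil ⊤ (volume.restrict Ω))
    (hid : ∀ ζ : Fin n → ℂ, (∑ j, ζ j * ζ j) = 0 →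
      ∀ᵐ x ∂(volume.restrict Ω),
        -((-Complex.I) * (∑ j, fderiv ℝ (fun y => Atil y j) x
              (Pi.single j (1 : ℝ))))
            * Complex.exp (∑ j, ζ j * (x j : ℂ))
          - ((m : ℂ) + 1) * (∑ j, Atil x j *
              ((-Complex.I) * ζ j * Complex.exp (∑ i, ζ i * (x i : ℂ))))
          + qtil x * Complex.exp (∑ j, ζ j * (x j : ℂ)) = 0) :
    (∀ x ∈ Ω, Atil x = 0) ∧ (∀ᵐ x ∂(volume.restrict Ω), qtil x = 0) :=
  transport_identity_forces_vanishing_general n m hn Ω hΩ Atil hAtil qtil hid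
end
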